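/- arXiv:1511.00293 — 10 statements merged into one kernel-verified Lean document; each statement's English description precedes it below -/
import Mathlib

section
/- Let X be a positive semidefinite Hermitian n×n matrix with eigenvalues x_0 ≥ x_1 ≥ … ≥ x_{n-1} in decreasing order, and let P be an orthogonal projection of rank k+1 (with k+1 ≤ n). Then trace(P·X) ≤ x_0 + x_1 + … + x_k. -/
/-!
Diagonalise `X = U D U*`. Then `trace (P X) = ∑ dᵢ λᵢ`, where the `dᵢ` are the diagonal entries
of the projection `Q = U* P U`: they lie in `[0, 1]` because `Q` and `1 - Q` are positive
semidefinite, and they sum to `trace Q = rank P = k + 1`. Among such weights, `∑ dᵢ λᵢ` is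
largest when the weight `1` sits on the `k + 1` largest eigenvalues.
-/

open ComplexOrder Matrix Finset

/-- The bathtub principle. -/
theorem Finset.sum_mul_le_sum_of_threshold {ι R : Type*} [Fintype ι] [CommRing R] [LinearOrder R]
    [IsStrictOrderedRing R] (s : Finset ι) {x d : ι → R} {c : R}
    (hs : ∀ i ∈ s, c ≤ x i) (hsc : ∀ i ∉ s, x i ≤ c) (hd : ∀ i, d i ∈ Set.Icc 0 1)
    (hsum : ∑ i, d i = #s) : ∑ i, x i * d i ≤ ∑ i ∈ s, x i := by
  classical
  set e : ι → R := fun i => if i ∈ s then 1 else 0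
  have hterm : ∀ i, (x i - c) * (d i - e i) ≤ 0 := by
    intro i
    by_cases hi : i ∈ s
    · simp only [e, if_pos hi]
      exact mul_nonpos_of_nonneg_of_nonpos (sub_nonneg.2 (hs i hi)) (sub_nonpos.2 (hd i).2)
    · simp only [e, if_neg hi, sub_zero]
      exact mul_nonpos_of_nonpos_of_nonneg (sub_nonpos.2 (hsc i hi)) (hd i).1
  have hxe : ∑ i ∈ s, x i = ∑ i, x i * e i := by simp [e, mul_ite]
  have hde : ∑ i, (d i - e i) = 0 := by simp [e, sum_sub_distrib, hsum]
  calc ∑ i, x i * d i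
      = ∑ i, (x i - c) * (d i - e i) + c * ∑ i, (d i - e i) + ∑ i, x i * e i := by
        rw [mul_sum, ← sum_add_distrib, ← sum_add_distrib]
        exact sum_congr rfl fun i _ => by ring
    _ ≤ ∑ i ∈ s, x i := by
        rw [hde, mul_zero, add_zero, ← hxe]
        exact add_le_of_nonpos_left (sum_nonpos fun i _ => hterm i)

theorem Antitone.sum_mul_le_sum_Iic {ι R : Type*} [Fintype ι] [LinearOrder ι]
    [LocallyFiniteOrderBot ι] [CommRing R] [LinearOrder R] [IsStrictOrderedRing R]
    {x d : ι → R} (hx : Antitone x) (a : ι) (hd : ∀ i, d i ∈ Set.Icc 0 1)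
    (hsum : ∑ i, d i = #(Iic a)) : ∑ i, x i * d i ≤ ∑ i ∈ Iic a, x i :=
  (Iic a).sum_mul_le_sum_of_threshold (fun _ hi => hx (mem_Iic.1 hi))
    (fun _ hi => hx (not_le.1 (mt mem_Iic.2 hi)).le) hd hsum

theorem Matrix.trace_eq_rank_of_isIdempotentElem {K m : Type*} [Field K] [Fintype m]
    [DecidableEq m] {P : Matrix m m K} (hP : IsIdempotentElem P) : P.trace = P.rank := by
  have hlin : IsIdempotentElem (toLin' P) := hP.map (toLinAlgEquiv' (R := K))
  rw [← trace_toLin'_eq, (LinearMap.IsIdempotentElem.isProj_range _ hlin).trace]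
  rfl

theorem Matrix.IsHermitian.posSemidef_of_isIdempotentElem {𝕜 m : Type*} [RCLike 𝕜] [Fintype m]
    {P : Matrix m m 𝕜} (hP : P.IsHermitian) (hP2 : IsIdempotentElem P) : P.PosSemidef := by
  have := posSemidef_conjTranspose_mul_self P
  rwa [hP.eq, hP2.eq] at this

theorem Matrix.IsHermitian.re_diag_mem_Icc_of_isIdempotentElem {𝕜 m : Type*} [RCLike 𝕜]
    [Fintype m] [DecidableEq m] {P : Matrix m m 𝕜} (hP : P.IsHermitian)
    (hP2 : IsIdempotentElem P) (i : m) : RCLike.re (P i i) ∈ Set.Icc 0 1 := by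
  have h0 := (hP.posSemidef_of_isIdempotentElem hP2).diag_nonneg (i := i)
  have h1 := ((isHermitian_one.sub hP).posSemidef_of_isIdempotentElem hP2.one_sub).diag_nonneg
    (i := i)
  simp only [sub_apply, one_apply_eq] at h1
  exact ⟨(RCLike.nonneg_iff.mp h0).1, by simpa using (RCLike.nonneg_iff.mp h1).1⟩

theorem Matrix.IsHermitian.trace_mul_eq_sum {𝕜 n : Type*} [RCLike 𝕜] [Fintype n] [DecidableEq n]
    {A : Matrix n n 𝕜} (hA : A.IsHermitian) (B : Matrix n n 𝕜) :
    (B * A).trace =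
      ∑ i, hA.eigenvalues i * Unitary.conjStarAlgAut 𝕜 _ (star hA.eigenvectorUnitary) B i i := by
  rw [← trace_map' (Unitary.conjStarAlgAut 𝕜 _ (star hA.eigenvectorUnitary)), map_mul,
    hA.conjStarAlgAut_star_eigenvectorUnitary, trace]
  simp [mul_diagonal, mul_comm]

/-- Ky Fan's maximum principle (finite dimension): if `X` is a positive semidefinite
Hermitian matrix with eigenvalues `x` listed in decreasing order and `P` is an orthogonal
projection of rank `k+1`, then `trace (P * X) ≤ x 0 + … + x k`. -/
theorem ky_fan_maximum_principle (n k : ℕ) (hk : k + 1 ≤ n)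
    (X P : Matrix (Fin n) (Fin n) ℂ)
    (hX : X.PosSemidef)
    (hP : P.IsHermitian) (hP2 : P * P = P) (hrank : P.rank = k + 1)
    (x : Fin n → ℝ) (hx : Antitone x)
    (hspec : ∃ σ : Equiv.Perm (Fin n), x = hX.1.eigenvalues ∘ σ) :
    (Matrix.trace (P * X)).re ≤ ∑ i : Fin (k + 1), x (Fin.castLE hk i) := by
  obtain ⟨σ, rfl⟩ := hspec
  set Q := Unitary.conjStarAlgAut ℂ _ (star hX.1.eigenvectorUnitary) P
  have hQ : Q.IsHermitian := IsSelfAdjoint.map hP _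
  have hQ2 : IsIdempotentElem Q := IsIdempotentElem.map hP2 _
  have hQtr : Q.trace = k + 1 := by
    rw [trace_map', trace_eq_rank_of_isIdempotentElem hP2, hrank, Nat.cast_succ]
  set a := Fin.castLE hk (Fin.last k)
  calc (P * X).trace.re = ∑ j, hX.1.eigenvalues (σ j) * (Q (σ j) (σ j)).re := by
        rw [hX.1.trace_mul_eq_sum, Complex.re_sum, ← Equiv.sum_comp σ]
        exact sum_congr rfl fun j _ => RCLike.re_ofReal_mul (K := ℂ) _ _
    _ ≤ ∑ i ∈ Iic a, hX.1.eigenvalues (σ i) := by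
        refine hx.sum_mul_le_sum_Iic a (fun j => hQ.re_diag_mem_Icc_of_isIdempotentElem hQ2 _) ?_
        rw [Equiv.sum_comp σ (fun i => (Q i i).re), ← Complex.re_sum]
        change Q.trace.re = _
        simp [a, hQtr]
    _ = ∑ i : Fin (k + 1), (hX.1.eigenvalues ∘ σ) (Fin.castLE hk i) := by
        rw [Fin.sum_Iic_castLE, ← Fin.top_eq_last, Iic_top]
        rfl
end

section
/- Let X and Y be positive semidefinite Hermitian n×n matrices with eigenvalues in decreasing order x_0 ≥ … ≥ x_{n-1} and y_0 ≥ … ≥ y_{n-1}, respectively. Then ∑_{i} (x_i − y_i)² ≤ ‖X − Y‖₂², where ‖·‖₂ is the Frobenius (Hilbert–Schmidt) norm. -/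
/-!
Write `X = U diag(a) U*` and `Y = V diag(b) V*`. Then `Re tr (X Y) = ∑ᵢⱼ aᵢ bⱼ |Wᵢⱼ|²` with
`W = U* V` unitary, so `Dᵢⱼ = |Wᵢⱼ|²` is doubly stochastic. By Birkhoff's theorem `D` is a convex
combination of permutation matrices, and on each of them the rearrangement inequality bounds the
bilinear form by `∑ᵢ xᵢ yᵢ` for the sorted eigenvalues. Hence `Re tr (X Y) ≤ ∑ᵢ xᵢ yᵢ`, and
expanding `‖X - Y‖₂² = tr X² + tr Y² - 2 Re tr (X Y)` gives the claim.
-/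

open ComplexOrder Matrix

namespace Matrix

variable {n : Type*} [Fintype n]

lemma IsHermitian.trace_conjTranspose_sub_mul_sub {R : Type*} [CommRing R] [StarRing R]
    {A B : Matrix n n R} (hA : A.IsHermitian) (hB : B.IsHermitian) :
    trace ((A - B)ᴴ * (A - B)) = trace (A * A) + trace (B * B) - 2 * trace (A * B) := by
  rw [conjTranspose_sub, hA.eq, hB.eq, sub_mul, mul_sub, mul_sub, trace_sub, trace_sub, trace_sub,
    trace_mul_comm B A]
  ring

variable [DecidableEq n]

section DoublyStochastic

lemma submatrix_mem_doublyStochastic {R : Type*} [Semiring R] [PartialOrder R] [IsOrderedRing R]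
    {M : Matrix n n R} (hM : M ∈ doublyStochastic R n) (σ τ : Equiv.Perm n) :
    M.submatrix σ τ ∈ doublyStochastic R n := by
  refine mem_doublyStochastic_iff_sum.2 ⟨fun _ _ ↦ nonneg_of_mem_doublyStochastic hM,
    fun i ↦ ?_, fun j ↦ ?_⟩
  · rw [← sum_row_of_mem_doublyStochastic hM (σ i)]
    exact Equiv.sum_comp τ (M (σ i))
  · rw [← sum_col_of_mem_doublyStochastic hM (τ j)]
    exact Equiv.sum_comp σ (fun i ↦ M i (τ j))

lemma _root_.Monovary.sum_mul_mul_le_sum_mul_of_mem_doublyStochastic {R : Type*} [Field R]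
    [LinearOrder R] [IsStrictOrderedRing R] {M : Matrix n n R} {f g : n → R}
    (hfg : Monovary f g) (hM : M ∈ doublyStochastic R n) :
    ∑ i, ∑ j, f i * g j * M i j ≤ ∑ i, f i * g i := by
  have hlin : IsLinearMap R fun M : Matrix n n R ↦ ∑ i, ∑ j, f i * g j * M i j :=
    ⟨fun A B ↦ by simp only [add_apply, mul_add, Finset.sum_add_distrib],
     fun c A ↦ by
      simp only [smul_apply, smul_eq_mul, Finset.mul_sum]
      exact Finset.sum_congr rfl fun _ _ ↦ Finset.sum_congr rfl fun _ _ ↦ by ring⟩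
  have hM' : M ∈ (doublyStochastic R n : Set (Matrix n n R)) := hM
  rw [doublyStochastic_eq_convexHull_permMatrix] at hM'
  refine convexHull_min ?_ (convex_halfSpace_le hlin _) hM'
  rintro _ ⟨σ, rfl⟩
  have hperm : ∀ i, ∑ j, f i * g j * σ.permMatrix R i j = f i * g (σ i) := fun i ↦ by
    simp [Equiv.Perm.permMatrix, PEquiv.toMatrix_apply, eq_comm]
  simpa only [Set.mem_ofPred_eq, hperm] using hfg.sum_mul_comp_perm_le_sum_mul

end DoublyStochastic

variable {𝕜 : Type*} [RCLike 𝕜]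

lemma sum_norm_sq_row_of_mem_unitaryGroup {W : Matrix n n 𝕜} (hW : W ∈ unitaryGroup n 𝕜)
    (i : n) : ∑ j, ‖W i j‖ ^ 2 = 1 := by
  have h := congr_fun (congr_fun (mem_unitaryGroup_iff.1 hW) i) i
  simp only [mul_apply, star_apply, one_apply_eq, RCLike.star_def, RCLike.mul_conj] at h
  exact_mod_cast h

lemma of_norm_sq_mem_doublyStochastic {W : Matrix n n 𝕜} (hW : W ∈ unitaryGroup n 𝕜) :
    of (fun i j ↦ ‖W i j‖ ^ 2) ∈ doublyStochastic ℝ n :=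
  mem_doublyStochastic_iff_sum.2 ⟨fun _ _ ↦ sq_nonneg _, sum_norm_sq_row_of_mem_unitaryGroup hW,
    sum_norm_sq_row_of_mem_unitaryGroup (transpose_mem_unitaryGroup_iff.2 hW)⟩

lemma trace_diagonal_mul_mul_diagonal_mul_star (a b : n → ℝ) (W : Matrix n n 𝕜) :
    trace (diagonal (RCLike.ofReal ∘ a) * W * diagonal (RCLike.ofReal ∘ b) * star W) =
      ((∑ i, ∑ j, a i * b j * ‖W i j‖ ^ 2 : ℝ) : 𝕜) := by
  push_cast
  refine Finset.sum_congr rfl fun i _ ↦ Finset.sum_congr rfl fun j _ ↦ ?_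
  simp only [mul_diagonal, diagonal_mul, star_apply, RCLike.star_def, Function.comp_apply]
  rw [← RCLike.mul_conj]
  ring

namespace IsHermitian

variable {A B : Matrix n n 𝕜}

lemma trace_mul (hA : A.IsHermitian) (hB : B.IsHermitian) :
    trace (A * B) = ((∑ i, ∑ j, hA.eigenvalues i * hB.eigenvalues j *
      ‖(star (hA.eigenvectorUnitary : Matrix n n 𝕜) * hB.eigenvectorUnitary) i j‖ ^ 2 : ℝ) : 𝕜) := by
  set U : Matrix n n 𝕜 := (hA.eigenvectorUnitary : Matrix n n 𝕜)
  set V : Matrix n n 𝕜 := (hB.eigenvectorUnitary : Matrix n n 𝕜)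
  rw [← trace_diagonal_mul_mul_diagonal_mul_star, star_mul, star_star]
  conv_lhs => rw [hA.spectral_theorem, hB.spectral_theorem]
  simp only [Unitary.conjStarAlgAut_apply]
  set Da : Matrix n n 𝕜 := diagonal (RCLike.ofReal ∘ hA.eigenvalues)
  set Db : Matrix n n 𝕜 := diagonal (RCLike.ofReal ∘ hB.eigenvalues)
  rw [show U * Da * star U * (V * Db * star V) = U * (Da * star U * V * Db * star V) by
    simp only [Matrix.mul_assoc], trace_mul_comm]
  simp only [Matrix.mul_assoc]

lemma re_trace_mul_self (hA : A.IsHermitian) :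
    RCLike.re (trace (A * A)) = ∑ i, hA.eigenvalues i ^ 2 := by
  rw [hA.trace_mul hA, Unitary.coe_star_mul_self, RCLike.ofReal_re]
  simp only [one_apply, sq]
  simp [apply_ite]

lemma re_trace_mul_le (hA : A.IsHermitian) (hB : B.IsHermitian) {σ τ : Equiv.Perm n}
    (h : Monovary (hA.eigenvalues ∘ σ) (hB.eigenvalues ∘ τ)) :
    RCLike.re (trace (A * B)) ≤ ∑ i, hA.eigenvalues (σ i) * hB.eigenvalues (τ i) := by
  set D := of fun i j ↦
    ‖(star (hA.eigenvectorUnitary : Matrix n n 𝕜) * hB.eigenvectorUnitary) i j‖ ^ 2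
  have hD : D ∈ doublyStochastic ℝ n :=
    of_norm_sq_mem_doublyStochastic (star hA.eigenvectorUnitary * hB.eigenvectorUnitary).2
  rw [hA.trace_mul hB, RCLike.ofReal_re]
  calc ∑ i, ∑ j, hA.eigenvalues i * hB.eigenvalues j * D i j
      = ∑ i, ∑ j, hA.eigenvalues (σ i) * hB.eigenvalues (τ j) * D (σ i) (τ j) := by
        rw [← Equiv.sum_comp σ]
        exact Finset.sum_congr rfl fun i _ ↦ (Equiv.sum_comp τ _).symm
    _ ≤ _ := h.sum_mul_mul_le_sum_mul_of_mem_doublyStochastic (submatrix_mem_doublyStochastic hD σ τ)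

end IsHermitian

end Matrix

/-- For positive semidefinite Hermitian matrices `X`, `Y` with eigenvalues `x`, `y` in
decreasing order, `∑ (x i - y i)^2 ≤ ‖X - Y‖₂² = trace ((X-Y)ᴴ (X-Y))`. -/
theorem sq_dist_eigenvalues_le_hilbert_schmidt (n : ℕ) (X Y : Matrix (Fin n) (Fin n) ℂ)
    (hX : X.PosSemidef) (hY : Y.PosSemidef)
    (x y : Fin n → ℝ) (hx : Antitone x) (hy : Antitone y)
    (hxs : ∃ σ : Equiv.Perm (Fin n), x = hX.1.eigenvalues ∘ σ)
    (hys : ∃ σ : Equiv.Perm (Fin n), y = hY.1.eigenvalues ∘ σ) :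
    ∑ i : Fin n, (x i - y i) ^ 2 ≤ (Matrix.trace ((X - Y)ᴴ * (X - Y))).re := by
  obtain ⟨σ, rfl⟩ := hxs
  obtain ⟨τ, rfl⟩ := hys
  set a := hX.1.eigenvalues
  set b := hY.1.eigenvalues
  have hXX : ∑ i, a (σ i) ^ 2 = RCLike.re (trace (X * X)) := by
    rw [hX.1.re_trace_mul_self, Equiv.sum_comp σ (a · ^ 2)]
  have hYY : ∑ i, b (τ i) ^ 2 = RCLike.re (trace (Y * Y)) := by
    rw [hY.1.re_trace_mul_self, Equiv.sum_comp τ (b · ^ 2)]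
  calc ∑ i, ((a ∘ σ) i - (b ∘ τ) i) ^ 2
      = ∑ i, a (σ i) ^ 2 + ∑ i, b (τ i) ^ 2 - 2 * ∑ i, a (σ i) * b (τ i) := by
        simp only [Function.comp_apply, sub_sq, Finset.sum_add_distrib, Finset.sum_sub_distrib,
          Finset.mul_sum, mul_assoc]
        ring
    _ ≤ RCLike.re (trace (X * X)) + RCLike.re (trace (Y * Y)) - 2 * RCLike.re (trace (X * Y)) := by
        rw [hXX, hYY]
        linarith [hX.1.re_trace_mul_le hY.1 (hx.monovary hy)]
    _ = (trace ((X - Y)ᴴ * (X - Y))).re := by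
        rw [← RCLike.re_to_complex, hX.1.trace_conjTranspose_sub_mul_sub hY.1, map_sub, map_add,
          RCLike.ofNat_mul_re]
end

section
/- Let X and Y be positive semidefinite Hermitian n×n matrices with decreasing eigenvalue sequences x and y. Then trace(X·Y) ≤ ∑_i x_i·y_i. -/
open ComplexOrder Matrix

/-!
Diagonalize `X = U diag(a) U⋆` and `Y = V diag(b) V⋆`. With `W = U⋆ V` one gets
`tr (X Y) = ∑ i j, a i * b j * ‖W i j‖ ^ 2`, and since `W` is unitary the matrix `(‖W i j‖ ^ 2)` is
doubly stochastic. By Birkhoff's theorem the right-hand side is then a convex combination of the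
sums `∑ i, a i * b (π i)` over permutations `π`, each of which is at most `∑ i, x i * y i` by the
rearrangement inequality.
-/

namespace Matrix

variable {n : Type*} [Fintype n] [DecidableEq n]

/-- By Birkhoff's theorem it suffices to treat permutation matrices, where this is the
rearrangement inequality. -/
theorem _root_.Monovary.dotProduct_mulVec_le_of_mem_doublyStochastic {R : Type*} [Field R]
    [LinearOrder R] [IsStrictOrderedRing R] {x y : n → R} (hxy : Monovary x y)
    {P : Matrix n n R} (hP : P ∈ doublyStochastic R n) :
    x ⬝ᵥ (P *ᵥ y) ≤ x ⬝ᵥ y := by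
  have hlin : IsLinearMap R fun M : Matrix n n R => x ⬝ᵥ (M *ᵥ y) :=
    ⟨fun M N => by rw [add_mulVec, dotProduct_add],
      fun c M => by rw [smul_mulVec, dotProduct_smul]⟩
  have hP' : P ∈ convexHull R {M | ∃ σ : Equiv.Perm n, σ.permMatrix R = M} :=
    doublyStochastic_eq_convexHull_permMatrix (R := R) (n := n) ▸ hP
  refine convexHull_min ?_ (convex_halfSpace_le hlin _) hP'
  rintro _ ⟨σ, rfl⟩
  rw [Set.mem_ofPred_eq, permMatrix_mulVec]
  exact hxy.sum_mul_comp_perm_le_sum_mul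

variable {𝕜 : Type*} [RCLike 𝕜]

theorem map_norm_sq_mem_doublyStochastic (U : unitaryGroup n 𝕜) :
    (U : Matrix n n 𝕜).map (‖·‖ ^ 2) ∈ doublyStochastic ℝ n := by
  refine mem_doublyStochastic_iff_sum.2 ⟨fun _ _ => sq_nonneg _, fun i => ?_, fun j => ?_⟩
  · have h := congr_fun₂ (mem_unitaryGroup_iff.1 U.2) i i
    simp only [star_eq_conjTranspose, mul_apply, conjTranspose_apply, RCLike.star_def,
      RCLike.mul_conj, one_apply_eq] at h
    exact_mod_cast h
  · have h := congr_fun₂ (mem_unitaryGroup_iff'.1 U.2) j j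
    simp only [star_eq_conjTranspose, mul_apply, conjTranspose_apply, RCLike.star_def,
      RCLike.conj_mul, one_apply_eq] at h
    exact_mod_cast h

theorem trace_diagonal_mul_mul_diagonal_mul_conjTranspose (W : Matrix n n 𝕜) (a b : n → ℝ) :
    trace (diagonal (RCLike.ofReal ∘ a) * W * diagonal (RCLike.ofReal ∘ b) * Wᴴ) =
      ((a ⬝ᵥ (W.map (‖·‖ ^ 2) *ᵥ b) : ℝ) : 𝕜) := by
  simp only [trace, diag, mul_apply (N := Wᴴ)]
  simp only [mul_diagonal, diagonal_mul, conjTranspose_apply, RCLike.star_def, dotProduct, mulVec,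
    map_apply, Function.comp_apply]
  push_cast
  refine Finset.sum_congr rfl fun i _ => ?_
  rw [Finset.mul_sum]
  refine Finset.sum_congr rfl fun j _ => ?_
  rw [← RCLike.mul_conj]
  ring

theorem IsHermitian.trace_mul_eq_dotProduct_mulVec {A B : Matrix n n 𝕜} (hA : A.IsHermitian)
    (hB : B.IsHermitian) :
    trace (A * B) = ((hA.eigenvalues ⬝ᵥ
      ((↑(star hA.eigenvectorUnitary * hB.eigenvectorUnitary) : Matrix n n 𝕜).map (‖·‖ ^ 2) *ᵥ
        hB.eigenvalues) : ℝ) : 𝕜) := by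
  rw [← trace_diagonal_mul_mul_diagonal_mul_conjTranspose]
  conv_lhs => rw [hA.spectral_theorem, hB.spectral_theorem, Unitary.conjStarAlgAut_apply,
    Unitary.conjStarAlgAut_apply]
  simp only [Submonoid.coe_mul, Unitary.coe_star, ← star_eq_conjTranspose, star_mul, star_star,
    mul_assoc]
  rw [trace_mul_comm]
  simp only [mul_assoc]

end Matrix

/-- For positive semidefinite Hermitian matrices `X`, `Y` with decreasing eigenvalue
sequences `x`, `y`, one has `trace (X * Y) ≤ ∑ x i * y i`. -/
theorem trace_mul_le_sum_eigenvalues (n : ℕ) (X Y : Matrix (Fin n) (Fin n) ℂ)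
    (hX : X.PosSemidef) (hY : Y.PosSemidef)
    (x y : Fin n → ℝ) (hx : Antitone x) (hy : Antitone y)
    (hxs : ∃ σ : Equiv.Perm (Fin n), x = hX.1.eigenvalues ∘ σ)
    (hys : ∃ σ : Equiv.Perm (Fin n), y = hY.1.eigenvalues ∘ σ) :
    (Matrix.trace (X * Y)).re ≤ ∑ i : Fin n, x i * y i := by
  obtain ⟨σ, rfl⟩ := hxs
  obtain ⟨τ, rfl⟩ := hys
  set P := (↑(star hX.1.eigenvectorUnitary * hY.1.eigenvectorUnitary) :
    Matrix (Fin n) (Fin n) ℂ).map (‖·‖ ^ 2)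
  have hP : P ∈ doublyStochastic ℝ (Fin n) := map_norm_sq_mem_doublyStochastic _
  have hPστ : P.submatrix σ τ ∈ doublyStochastic ℝ (Fin n) :=
    reindex_mem_doublyStochastic (e₁ := σ.symm) (e₂ := τ.symm) hP
  calc (trace (X * Y)).re
      = (hX.1.eigenvalues ∘ σ) ⬝ᵥ (P.submatrix σ τ *ᵥ (hY.1.eigenvalues ∘ τ)) := by
        rw [hX.1.trace_mul_eq_dotProduct_mulVec hY.1, ← RCLike.re_to_complex, RCLike.ofReal_re,
          submatrix_mulVec_equiv, Function.comp_assoc, Equiv.self_comp_symm, Function.comp_id,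
          comp_equiv_dotProduct_comp_equiv]
    _ ≤ _ := (hx.monovary hy).dotProduct_mulVec_le_of_mem_doublyStochastic hPστ
end

section
/- Let {x^{(k)}} and {y^{(k)}} be sequences (indexed by k ∈ ℕ) of summable decreasing nonnegative sequences such that x^{(k)} is weakly sub-majorized by y^{(k)} for every k. If the pointwise sums X_n = ∑_k x^{(k)}_n and Y_n = ∑_k y^{(k)}_n are finite and summable, and each y^{(k)} is decreasing, then the decreasing rearrangement of X is weakly sub-majorized by Y. -/
/-!
Sorting `s` increasingly, its `j`-th element is at least `j`, so for an antitone sequence the sum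
over `s` is bounded by the sum over the first `#s` indices. Applied to each `x k` and combined with
the majorization `x k ≺_w y k`, this bounds `∑_{i ∈ s} x k i` by `∑_{i < #s} y k i` for every `k`;
summing over `k` and exchanging the finite sum with the `tsum` gives the claim.
-/

open Finset

theorem Finset.sum_le_sum_range_card_of_antitone {M : Type*} [AddCommMonoid M] [PartialOrder M]
    [IsOrderedAddMonoid M] {f : ℕ → M} (hf : Antitone f) (s : Finset ℕ) :
    ∑ i ∈ s, f i ≤ ∑ i ∈ range #s, f i := by
  induction s using Finset.induction_on_max with
  | empty => simp
  | insert a t hlt ih =>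
    have hat : a ∉ t := fun ha => lt_irrefl a (hlt a ha)
    have hcard : #t ≤ a := by
      simpa using card_le_card fun i hi => mem_range.2 (hlt i hi)
    rw [sum_insert hat, card_insert_of_notMem hat, sum_range_succ, add_comm]
    exact add_le_add ih (hf hcard)

theorem submajorization_of_sums_general (x y : ℕ → ℕ → NNReal)
    (hxa : ∀ k, Antitone (x k))
    (hmaj : ∀ k n, ∑ i ∈ Finset.range (n + 1), x k i ≤ ∑ i ∈ Finset.range (n + 1), y k i)
    (hXfin : ∀ i, Summable fun k => x k i) (hYfin : ∀ i, Summable fun k => y k i) :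
    ∀ s : Finset ℕ, ∑ i ∈ s, (∑' k, x k i) ≤ ∑ i ∈ Finset.range s.card, (∑' k, y k i) := by
  intro s
  have hmaj_card : ∀ k, ∑ i ∈ range #s, x k i ≤ ∑ i ∈ range #s, y k i := fun k => by
    cases #s with
    | zero => simp
    | succ n => exact hmaj k n
  rw [← Summable.tsum_finsetSum fun i _ => hXfin i, ← Summable.tsum_finsetSum fun i _ => hYfin i]
  exact Summable.tsum_le_tsum
    (fun k => (sum_le_sum_range_card_of_antitone (hxa k) s).trans (hmaj_card k))
    (summable_sum fun i _ => hXfin i) (summable_sum fun i _ => hYfin i)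

/-- If `x k` is weakly sub-majorized by the decreasing sequence `y k` for every `k`, then
the pointwise sum `X i = ∑' k, x k i` is weakly sub-majorized by `Y i = ∑' k, y k i`:
for every finite set `s` of indices, `∑_{i ∈ s} X i ≤ ∑_{i < s.card} Y i`
(the left-hand supremum over such `s` gives the partial sums of the decreasing
rearrangement of `X`). -/
theorem submajorization_of_sums (x y : ℕ → ℕ → NNReal)
    (hxa : ∀ k, Antitone (x k)) (hya : ∀ k, Antitone (y k))
    (hxs : ∀ k, Summable (x k)) (hys : ∀ k, Summable (y k))
    (hmaj : ∀ k n, ∑ i ∈ Finset.range (n + 1), x k i ≤ ∑ i ∈ Finset.range (n + 1), y k i)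
    (hXfin : ∀ i, Summable fun k => x k i) (hYfin : ∀ i, Summable fun k => y k i)
    (hXsum : Summable fun i => ∑' k, x k i) (hYsum : Summable fun i => ∑' k, y k i) :
    ∀ s : Finset ℕ, ∑ i ∈ s, (∑' k, x k i) ≤ ∑ i ∈ Finset.range s.card, (∑' k, y k i) :=
  submajorization_of_sums_general x y hxa hmaj hXfin hYfin
end

section
/- Let p : ℕ → ℝ≥0 be decreasing (p_0 ≥ p_1 ≥ …) and summable, and let 0 ≤ λ ≤ 1. Then the thinned sequence T_λ(p), with T_λ(p)_n = ∑_{k≥n} C(k,n)λⁿ(1−λ)^{k−n} p_k, is also decreasing. -/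
/-!
Write `c n k = C(k,n) λⁿ (1-λ)^(k-n)`. By Pascal's rule and `λ + (1-λ) = 1`, the partial sums
`∑_{j<k} (c n j - c (n+1) j)` equal `C(k,n+1) λⁿ (1-λ)^(k-n-1) ≥ 0`, so Abel summation against the
decreasing sequence `p` gives `∑ c (n+1) k p k ≤ ∑ c n k p k`. These partial sums are at most `λ⁻¹`,
so for `λ ≠ 0` every series involved converges; for `λ = 0` the thinned sequence vanishes from
index `1` on.
-/

open scoped NNReal

theorem NNReal.tsum_mul_le_tsum_mul_of_add_eq {a b g p : ℕ → ℝ≥0} (hp : Antitone p)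
    (hg₀ : g 0 = 0) (hab : ∀ m, a m + g m = b m + g (m + 1))
    (ha : Summable fun m ↦ a m * p m) (hg : Summable fun m ↦ g (m + 1) * p m) :
    ∑' m, b m * p m ≤ ∑' m, a m * p m := by
  have hle : ∀ m, g (m + 1) * p (m + 1) ≤ g (m + 1) * p m := fun m ↦ by
    gcongr; exact hp m.le_succ
  have hg_succ : Summable fun m ↦ g (m + 1) * p (m + 1) := NNReal.summable_of_le hle hg
  have hgp : Summable fun m ↦ g m * p m := (NNReal.summable_nat_add_iff 1).1 hg_succ
  have hb : Summable fun m ↦ b m * p m :=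
    NNReal.summable_of_le (fun m ↦ by rw [← add_mul, hab, add_mul]; exact le_self_add)
      (ha.add hgp)
  have hshift : ∑' m, g m * p m = ∑' m, g (m + 1) * p (m + 1) := by
    rw [tsum_eq_zero_add' (f := fun m ↦ g m * p m) hg_succ, hg₀, zero_mul, zero_add]
  refine le_of_add_le_add_right (a := ∑' m, g (m + 1) * p m) ?_
  calc ∑' m, b m * p m + ∑' m, g (m + 1) * p m
      = ∑' m, (a m + g m) * p m := by
        rw [← hb.tsum_add hg]; simp_rw [← add_mul, ← hab]
    _ = ∑' m, a m * p m + ∑' m, g (m + 1) * p (m + 1) := by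
        simp_rw [add_mul]; rw [ha.tsum_add hgp, hshift]
    _ ≤ ∑' m, a m * p m + ∑' m, g (m + 1) * p m :=
        add_le_add le_rfl (hg_succ.tsum_le_tsum hle hg)

section Thinning

variable {R : Type*} [CommSemiring R]

def thinningCoeff (L Q : R) (n k : ℕ) : R := (k.choose n : R) * L ^ n * Q ^ (k - n)

def thinningGap (L Q : R) (n k : ℕ) : R := (k.choose (n + 1) : R) * L ^ n * Q ^ (k - (n + 1))

@[simp]
theorem thinningGap_zero (L Q : R) (n : ℕ) : thinningGap L Q n 0 = 0 := by
  simp [thinningGap]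

theorem thinningGap_mul (L Q : R) (n k : ℕ) :
    thinningGap L Q n k * L = thinningCoeff L Q (n + 1) k := by
  simp only [thinningGap, thinningCoeff]; ring

theorem thinningCoeff_add_thinningGap {L Q : R} (h : L + Q = 1) (n k : ℕ) :
    thinningCoeff L Q n k + thinningGap L Q n k
      = thinningCoeff L Q (n + 1) k + thinningGap L Q n (k + 1) := by
  simp only [thinningCoeff, thinningGap]
  rcases lt_trichotomy k n with hk | rfl | hk
  · simp [Nat.choose_eq_zero_of_lt, hk, Nat.lt_succ_of_lt hk]
  · simp
  · obtain ⟨d, rfl⟩ := Nat.exists_eq_add_of_lt hk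
    rw [Nat.choose_succ_succ' (n + d + 1)]
    simp only [show n + d + 1 - n = d + 1 by omega, show n + d + 1 - (n + 1) = d by omega,
      show n + d + 1 + 1 - (n + 1) = d + 1 by omega]
    push_cast
    set c := ((n + d + 1).choose (n + 1) : R)
    rw [← mul_one (c * L ^ n * Q ^ d), ← h]
    ring

theorem thinningCoeff_le_one [PartialOrder R] [IsOrderedRing R] {L Q : R} (hL : 0 ≤ L)
    (hQ : 0 ≤ Q) (h : L + Q = 1) (n k : ℕ) : thinningCoeff L Q n k ≤ 1 := by
  rcases lt_or_ge k n with hk | hk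
  · simp [thinningCoeff, Nat.choose_eq_zero_of_lt hk]
  calc thinningCoeff L Q n k
      = L ^ n * Q ^ (k - n) * (k.choose n : R) := by rw [thinningCoeff]; ring
    _ ≤ ∑ i ∈ Finset.range (k + 1), L ^ i * Q ^ (k - i) * (k.choose i : R) :=
        Finset.single_le_sum (f := fun i ↦ L ^ i * Q ^ (k - i) * (k.choose i : R))
          (fun i _ ↦ by positivity) (Finset.mem_range_succ_iff.2 hk)
    _ = 1 := by rw [← add_pow, h, one_pow]

end Thinning

theorem summable_thinningCoeff_mul {L Q : ℝ≥0} (h : L + Q = 1) {p : ℕ → ℝ≥0} (hp : Summable p)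
    (n : ℕ) : Summable fun k ↦ thinningCoeff L Q n k * p k :=
  NNReal.summable_of_le
    (fun k ↦ mul_le_of_le_one_left' (thinningCoeff_le_one zero_le zero_le h n k)) hp

theorem summable_thinningGap_succ_mul {L Q : ℝ≥0} (h : L + Q = 1) (hL : L ≠ 0) {p : ℕ → ℝ≥0}
    (hp : Summable p) (n : ℕ) : Summable fun k ↦ thinningGap L Q n (k + 1) * p k := by
  have hbound (k : ℕ) : thinningGap L Q n (k + 1) ≤ L⁻¹ := by
    rw [NNReal.le_inv_iff_mul_le hL, thinningGap_mul]
    exact thinningCoeff_le_one zero_le zero_le h _ _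
  exact NNReal.summable_of_le (fun k ↦ mul_le_mul_of_nonneg_right (hbound k) zero_le)
    (hp.mul_left L⁻¹)

/-- The thinning of a decreasing summable nonnegative sequence is decreasing
(passive-preserving property of the thinning channel). -/
theorem thinning_antitone (p : ℕ → NNReal) (hp : Summable p) (hmono : Antitone p)
    (lam : NNReal) (hlam : lam ≤ 1) :
    Antitone (fun n => ∑' k, (Nat.choose k n : NNReal) * lam ^ n * (1 - lam) ^ (k - n) * p k) := by
  refine antitone_nat_of_succ_le fun n ↦ ?_
  rcases eq_or_ne lam 0 with rfl | hlam₀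
  · simp [pow_succ]
  have h : lam + (1 - lam) = 1 := add_tsub_cancel_of_le hlam
  exact NNReal.tsum_mul_le_tsum_mul_of_add_eq hmono (thinningGap_zero _ _ n)
    (thinningCoeff_add_thinningGap h n) (summable_thinningCoeff_mul h hp n)
    (summable_thinningGap_succ_mul h hlam₀ hp n)
end

section
/- Let x : ℕ → ℝ≥0 be summable, let x↓ be its decreasing rearrangement, and let 0 ≤ λ ≤ 1. Then T_λ(x) is majorized by T_λ(x↓): for every n, ∑_{i=0}^n (T_λ(x))↓_i ≤ ∑_{i=0}^n T_λ(x↓)_i, with equality of total sums. -/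
/-!
Write `∑_{i ∈ s} T_λ(x)_i = ∑_k x_k w_k` with `w_k = P(Bin(k, λ) ∈ s)`, and likewise
`∑_{i < n} T_λ(x↓)_i = ∑_k x↓_k v_k` with `v_k = P(Bin(k, λ) < n)`, `n = #s`; `v` is decreasing.
Both `x` and `w` are weakly majorized by the decreasing sequences `x↓` and `v`, so two Abel
summations give `∑ x_k w_k ≤ ∑ x↓_k v_k`.

For `w ≺ v`, realise `Bin(k, λ)` as `#(A ∩ [0, k))` for a random set `A` containing each integer
independently with probability `λ`. Then `λ w_k` is the probability that `k ∈ A` and the rank of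
`k` in `A` lies in `s`, so `λ ∑_{k ∈ t} w_k` is the expected number of elements of `A ∩ t` with
rank in `s`. Ranks are distinct, so this is at most `E min(#s, #(A ∩ t)) = E min(n, Bin(#t, λ))`,
with equality when `t` and `s` are initial segments.

The total sums agree because each column of the kernel is a probability distribution.
-/

open Finset
open scoped NNReal ENNReal

namespace Thinning

variable {α : Type*} {lam : ℝ≥0}

def WeaklyMajorizedBy (x y : ℕ → ℝ≥0) : Prop :=
  ∀ u : Finset ℕ, ∑ k ∈ u, x k ≤ ∑ j ∈ range #u, y j

theorem sum_range_mul_le_sum_range_mul {a b c : ℕ → ℝ≥0} {r : ℕ}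
    (ha : AntitoneOn a (Set.Iio r))
    (hbc : ∀ m ≤ r, ∑ j ∈ range m, b j ≤ ∑ j ∈ range m, c j) :
    ∑ j ∈ range r, a j * b j ≤ ∑ j ∈ range r, a j * c j := by
  induction r generalizing a with
  | zero => simp
  | succ r ih =>
    have hle : ∀ j ∈ range r, a r ≤ a j := fun j hj =>
      ha (mem_range.1 hj |>.trans r.lt_succ_self) r.lt_succ_self (mem_range.1 hj).le
    have peel (d : ℕ → ℝ≥0) : ∑ j ∈ range (r + 1), a j * d j
        = ∑ j ∈ range r, (a j - a r) * d j + a r * ∑ j ∈ range (r + 1), d j := by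
      rw [sum_range_succ, sum_range_succ, mul_add, mul_sum, ← add_assoc, ← sum_add_distrib]
      congr 1
      exact sum_congr rfl fun j hj => by rw [← add_mul, tsub_add_cancel_of_le (hle j hj)]
    have ha' : AntitoneOn (fun j => a j - a r) (Set.Iio r) := fun i hi j hj hij =>
      tsub_le_tsub_right (ha.mono (Set.Iio_subset_Iio r.le_succ) hi hj hij) _
    rw [peel b, peel c]
    exact add_le_add (ih ha' fun m hm => hbc m (hm.trans r.le_succ))
      (mul_le_mul_of_nonneg_left (hbc _ le_rfl) zero_le)

theorem exists_antitoneOn_enumeration (f : ℕ → ℝ≥0) (t : Finset ℕ) :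
    ∃ e : ℕ → ℕ, (range #t).image e = t ∧ AntitoneOn (f ∘ e) (Set.Iio #t) := by
  induction t using Finset.induction_on_min_value f with
  | empty => exact ⟨id, by simp, fun i hi => (Nat.not_lt_zero i hi).elim⟩
  | insert a s has hmin ih =>
    obtain ⟨e, he, hanti⟩ := ih
    refine ⟨fun j => if j < #s then e j else a, ?_, ?_⟩
    · rw [card_insert_of_notMem has, range_add_one, image_insert, if_neg (lt_irrefl _)]
      conv_rhs => rw [← he]
      exact congrArg _ (image_congr fun j hj => if_pos (mem_range.1 hj))
    · rw [card_insert_of_notMem has]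
      intro i hi j hj hij
      simp only [Function.comp_apply]
      split_ifs with hj' hi' hi''
      · exact hanti hi' hj' hij
      · omega
      · exact hmin _ (he ▸ mem_image_of_mem e (mem_range.2 hi''))
      · exact le_rfl

theorem WeaklyMajorizedBy.sum_mul_le {x y w v : ℕ → ℝ≥0} (hxy : WeaklyMajorizedBy x y)
    (hwv : WeaklyMajorizedBy w v) (hv : Antitone v) (t : Finset ℕ) :
    ∑ k ∈ t, x k * w k ≤ ∑ j ∈ range #t, y j * v j := by
  obtain ⟨e, he, hanti⟩ := exists_antitoneOn_enumeration x t
  have hinj : Set.InjOn e (range #t) :=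
    injOn_of_card_image_eq (by rw [he, card_range])
  have hsum (g : ℕ → ℝ≥0) : ∑ k ∈ t, g k = ∑ j ∈ range #t, g (e j) := by
    conv_lhs => rw [← he]
    exact sum_image hinj
  have hprefix {g z : ℕ → ℝ≥0} (hgz : WeaklyMajorizedBy g z) (m : ℕ) (hm : m ≤ #t) :
      ∑ j ∈ range m, g (e j) ≤ ∑ j ∈ range m, z j := by
    have hinj' : Set.InjOn e (range m) := hinj.mono (by simpa using range_subset_range.2 hm)
    simpa [sum_image hinj', card_image_of_injOn hinj'] using hgz ((range m).image e)
  calc ∑ k ∈ t, x k * w k = ∑ j ∈ range #t, x (e j) * w (e j) := hsum _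
    _ ≤ ∑ j ∈ range #t, x (e j) * v j := sum_range_mul_le_sum_range_mul hanti (hprefix hwv)
    _ = ∑ j ∈ range #t, v j * x (e j) := by simp_rw [mul_comm]
    _ ≤ ∑ j ∈ range #t, v j * y j :=
        sum_range_mul_le_sum_range_mul (hv.antitoneOn _) (hprefix hxy)
    _ = ∑ j ∈ range #t, y j * v j := by simp_rw [mul_comm]

/-- The probability that a random subset of `U`, containing each element independently with
probability `lam`, equals `A` (for `A ⊆ U`). -/
noncomputable def bernoulliWeight (lam : ℝ≥0) (U A : Finset α) : ℝ≥0 :=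
  lam ^ #A * (1 - lam) ^ (#U - #A)

theorem sum_powerset_bernoulliWeight (hlam : lam ≤ 1) (U : Finset α) :
    ∑ A ∈ U.powerset, bernoulliWeight lam U A = 1 := by
  simp only [bernoulliWeight, sum_pow_mul_eq_add_pow, add_tsub_cancel_of_le hlam, one_pow]

noncomputable def kernel (lam : ℝ≥0) (i k : ℕ) : ℝ≥0 :=
  (k.choose i : ℝ≥0) * lam ^ i * (1 - lam) ^ (k - i)

theorem kernel_eq_zero_of_lt {i k : ℕ} (h : k < i) : kernel lam i k = 0 := by
  simp [kernel, Nat.choose_eq_zero_of_lt h]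

theorem kernel_zero_left (i k : ℕ) : kernel 0 i k = if i = 0 then 1 else 0 := by
  rcases i with _ | i <;> simp [kernel]

theorem sum_range_kernel (hlam : lam ≤ 1) (k : ℕ) :
    ∑ i ∈ range (k + 1), kernel lam i k = 1 := by
  have h := (add_pow lam (1 - lam) k).symm
  rw [add_tsub_cancel_of_le hlam, one_pow] at h
  rw [← h]
  exact sum_congr rfl fun i _ => by rw [kernel]; ring

theorem sum_powersetCard_bernoulliWeight (i : ℕ) (u : Finset α) :
    ∑ B ∈ u.powersetCard i, bernoulliWeight lam u B = kernel lam i #u := by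
  rw [sum_congr rfl fun B hB => by rw [bernoulliWeight, (mem_powersetCard.1 hB).2], sum_const,
    card_powersetCard, nsmul_eq_mul, kernel, mul_assoc]

theorem sum_kernel_eq_sum_powerset (s : Finset ℕ) (u : Finset α) :
    ∑ i ∈ s, kernel lam i #u
      = ∑ B ∈ u.powerset, bernoulliWeight lam u B * if #B ∈ s then 1 else 0 := by
  calc ∑ i ∈ s, kernel lam i #u
      = ∑ i ∈ s, ∑ B ∈ u.powerset, if #B = i then bernoulliWeight lam u B else 0 := by
        simp_rw [← sum_powersetCard_bernoulliWeight, powersetCard_eq_filter, sum_filter]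
    _ = ∑ B ∈ u.powerset, ∑ i ∈ s, if #B = i then bernoulliWeight lam u B else 0 := sum_comm
    _ = _ := by simp_rw [sum_ite_eq, mul_ite, mul_one, mul_zero]

theorem sum_kernel_le_one (hlam : lam ≤ 1) (s : Finset ℕ) (k : ℕ) :
    ∑ i ∈ s, kernel lam i k ≤ 1 := by
  have h := sum_kernel_eq_sum_powerset (lam := lam) s (range k)
  rw [card_range] at h
  rw [h]
  refine (sum_le_sum fun B _ => ?_).trans (sum_powerset_bernoulliWeight hlam (range k)).le
  exact mul_le_of_le_one_right zero_le (by split_ifs <;> norm_num)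

theorem kernel_le_one (hlam : lam ≤ 1) (i k : ℕ) : kernel lam i k ≤ 1 := by
  simpa using sum_kernel_le_one hlam {i} k

section

variable [DecidableEq α]

theorem bernoulliWeight_insert_of_subset {a : α} {U A : Finset α} (ha : a ∉ U) (hA : A ⊆ U) :
    bernoulliWeight lam (insert a U) A = (1 - lam) * bernoulliWeight lam U A := by
  have := card_le_card hA
  rw [bernoulliWeight, bernoulliWeight, card_insert_of_notMem ha,
    show #U + 1 - #A = #U - #A + 1 by omega, pow_succ]
  ring

theorem bernoulliWeight_insert_insert {a : α} {U A : Finset α} (ha : a ∉ U) (hA : A ⊆ U) :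
    bernoulliWeight lam (insert a U) (insert a A) = lam * bernoulliWeight lam U A := by
  rw [bernoulliWeight, bernoulliWeight, card_insert_of_notMem ha,
    card_insert_of_notMem fun h => ha (hA h), Nat.add_sub_add_right, pow_succ]
  ring

theorem sum_powerset_bernoulliWeight_mul_inter (hlam : lam ≤ 1) {u U : Finset α} (hu : u ⊆ U)
    (f : Finset α → ℝ≥0) :
    ∑ A ∈ U.powerset, bernoulliWeight lam U A * f (A ∩ u)
      = ∑ B ∈ u.powerset, bernoulliWeight lam u B * f B := by
  rw [← union_sdiff_of_subset hu]
  have hdisj : Disjoint u (U \ u) := disjoint_sdiff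
  generalize U \ u = v at hdisj ⊢
  induction v using Finset.induction_on with
  | empty =>
    rw [union_empty]
    exact sum_congr rfl fun A hA => by rw [inter_eq_left.2 (mem_powerset.1 hA)]
  | insert a v hav ih =>
    obtain ⟨hau, hdisj⟩ := disjoint_insert_right.1 hdisj
    have hauv : a ∉ u ∪ v := by simp [hau, hav]
    rw [union_insert, sum_powerset_insert hauv, ← ih hdisj, ← sum_add_distrib]
    refine sum_congr rfl fun A hA => ?_
    rw [bernoulliWeight_insert_of_subset hauv (mem_powerset.1 hA),
      bernoulliWeight_insert_insert hauv (mem_powerset.1 hA), insert_inter_of_notMem hau,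
      mul_assoc, mul_assoc, ← add_mul, tsub_add_cancel_of_le hlam, one_mul]

theorem sum_powerset_bernoulliWeight_mul_card_inter (hlam : lam ≤ 1) {u u' U : Finset α}
    (hu : u ⊆ U) (hu' : u' ⊆ U) (h : #u = #u') (g : ℕ → ℝ≥0) :
    ∑ A ∈ U.powerset, bernoulliWeight lam U A * g #(A ∩ u)
      = ∑ A ∈ U.powerset, bernoulliWeight lam U A * g #(A ∩ u') := by
  have hcard (v : Finset α) : ∑ B ∈ v.powerset, bernoulliWeight lam v B * g #B
      = ∑ j ∈ range (#v + 1), (#v).choose j • (lam ^ j * (1 - lam) ^ (#v - j) * g j) :=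
    sum_powerset_apply_card (fun j => lam ^ j * (1 - lam) ^ (#v - j) * g j)
  rw [sum_powerset_bernoulliWeight_mul_inter hlam hu (fun B => g #B),
    sum_powerset_bernoulliWeight_mul_inter hlam hu' (fun B => g #B), hcard, hcard, h]

end

theorem sum_kernel_eq_sum_powerset_range (hlam : lam ≤ 1) (s : Finset ℕ) {k M : ℕ}
    (hkM : k ≤ M) :
    ∑ i ∈ s, kernel lam i k = ∑ A ∈ (range M).powerset,
      bernoulliWeight lam (range M) A * if #(A ∩ range k) ∈ s then 1 else 0 := by
  rw [sum_powerset_bernoulliWeight_mul_inter hlam (range_subset_range.2 hkM)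
    (fun B => if #B ∈ s then 1 else 0), ← sum_kernel_eq_sum_powerset, card_range]

theorem mul_sum_kernel_eq_sum_powerset_range (hlam : lam ≤ 1) (s : Finset ℕ) {k M : ℕ}
    (hkM : k < M) :
    lam * ∑ i ∈ s, kernel lam i k = ∑ A ∈ (range M).powerset,
      bernoulliWeight lam (range M) A * if k ∈ A ∧ #(A ∩ range k) ∈ s then 1 else 0 := by
  set f : Finset ℕ → ℝ≥0 := fun B => if k ∈ B ∧ #(B ∩ range k) ∈ s then 1 else 0
  have hf (A : Finset ℕ) : f (A ∩ range (k + 1)) = f A := by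
    simp only [f, inter_assoc, inter_eq_right.2 (range_subset_range.2 k.le_succ), mem_inter,
      mem_range, Nat.lt_succ_self, and_true]
  have hk : k ∉ range k := notMem_range_self
  calc lam * ∑ i ∈ s, kernel lam i k
      = lam * ∑ B ∈ (range k).powerset, bernoulliWeight lam (range k) B * f (insert k B) := by
        rw [← card_range k, sum_kernel_eq_sum_powerset, card_range]
        refine congrArg _ (sum_congr rfl fun B hB => ?_)
        simp only [f, mem_insert_self, true_and, insert_inter_of_notMem hk,
          inter_eq_left.2 (mem_powerset.1 hB)]
    _ = ∑ B ∈ (range (k + 1)).powerset, bernoulliWeight lam (range (k + 1)) B * f B := by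
        have h0 :
            ∑ B ∈ (range k).powerset, bernoulliWeight lam (insert k (range k)) B * f B = 0 :=
          sum_eq_zero fun B hB => by
            have hkB : k ∉ B := fun h => hk (mem_powerset.1 hB h)
            simp [f, hkB]
        rw [range_add_one, sum_powerset_insert hk, h0, zero_add, mul_sum]
        exact sum_congr rfl fun B hB => by
          rw [bernoulliWeight_insert_insert hk (mem_powerset.1 hB), mul_assoc]
    _ = ∑ A ∈ (range M).powerset, bernoulliWeight lam (range M) A * f A := by
        rw [← sum_powerset_bernoulliWeight_mul_inter hlam (range_subset_range.2 hkM)]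
        simp_rw [hf]

theorem strictMonoOn_card_inter_range (A : Finset ℕ) :
    StrictMonoOn (fun k => #(A ∩ range k)) A :=
  fun k₁ hk₁ _ _ h => card_lt_card <| ssubset_iff_of_subset
    (inter_subset_inter_left (range_subset_range.2 h.le)) |>.2
    ⟨k₁, mem_inter.2 ⟨hk₁, mem_range.2 h⟩, by simp⟩

theorem card_filter_mem_card_inter_range_mem_le (A t s : Finset ℕ) :
    #{k ∈ t | k ∈ A ∧ #(A ∩ range k) ∈ s} ≤ min #s #(A ∩ t) := by
  refine le_min (card_le_card_of_injOn (fun k => #(A ∩ range k)) (fun k hk => ?_) ?_)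
    (card_le_card fun k hk => ?_)
  · exact (mem_filter.1 hk).2.2
  · exact (strictMonoOn_card_inter_range A).injOn.mono fun k hk => (mem_filter.1 hk).2.1
  · simp only [mem_filter] at hk
    exact mem_inter.2 ⟨hk.2.1, hk.1⟩

theorem card_filter_card_inter_range_lt (B : Finset ℕ) (n : ℕ) :
    #{k ∈ B | #(B ∩ range k) < n} = min n #B := by
  induction B using Finset.induction_on_max with
  | empty => simp
  | insert a B hlt ih =>
    have haB : a ∉ B := fun h => lt_irrefl a (hlt a h)
    have hbelow : insert a B ∩ range a = B := by
      rw [insert_inter_of_notMem notMem_range_self, inter_eq_left]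
      exact fun k hk => mem_range.2 (hlt k hk)
    have hB : {k ∈ B | #(insert a B ∩ range k) < n} = {k ∈ B | #(B ∩ range k) < n} :=
      filter_congr fun k hk => by
        rw [insert_inter_of_notMem fun h => lt_asymm (hlt k hk) (mem_range.1 h)]
    rw [filter_insert, hbelow, hB, card_insert_of_notMem haB]
    split_ifs with h
    · rw [card_insert_of_notMem fun h' => haB (mem_filter.1 h').1, ih]
      omega
    · rw [ih]
      omega

theorem card_filter_mem_card_inter_range_lt (A : Finset ℕ) (m n : ℕ) :
    #{k ∈ range m | k ∈ A ∧ #(A ∩ range k) ∈ range n} = min n #(A ∩ range m) := by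
  rw [← card_filter_card_inter_range_lt]
  congr 1
  ext k
  simp only [mem_filter, mem_inter, mem_range]
  by_cases hk : k < m
  · rw [inter_assoc, inter_eq_right.2 (range_subset_range.2 hk.le)]
    tauto
  · tauto

theorem antitone_sum_range_kernel (hlam : lam ≤ 1) (n : ℕ) :
    Antitone fun k => ∑ i ∈ range n, kernel lam i k := by
  refine antitone_nat_of_succ_le fun k => ?_
  rw [sum_kernel_eq_sum_powerset_range hlam _ le_rfl,
    sum_kernel_eq_sum_powerset_range hlam _ k.le_succ]
  refine sum_le_sum fun A _ => mul_le_mul_of_nonneg_left ?_ zero_le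
  have : #(A ∩ range k) ≤ #(A ∩ range (k + 1)) :=
    card_le_card (inter_subset_inter_left (range_subset_range.2 k.le_succ))
  simp only [mem_range]
  split_ifs <;> first | omega | norm_num

theorem mul_sum_sum_kernel_eq_sum_powerset (hlam : lam ≤ 1) (s : Finset ℕ) {t : Finset ℕ}
    {M : ℕ} (ht : t ⊆ range M) :
    lam * ∑ k ∈ t, ∑ i ∈ s, kernel lam i k = ∑ A ∈ (range M).powerset,
      bernoulliWeight lam (range M) A * #{k ∈ t | k ∈ A ∧ #(A ∩ range k) ∈ s} := by
  rw [mul_sum, sum_congr rfl fun k hk =>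
    mul_sum_kernel_eq_sum_powerset_range hlam s (mem_range.1 (ht hk)), sum_comm]
  simp_rw [← mul_sum, sum_boole]

theorem weaklyMajorizedBy_sum_kernel (hlam : lam ≤ 1) (s : Finset ℕ) :
    WeaklyMajorizedBy (fun k => ∑ i ∈ s, kernel lam i k)
      (fun k => ∑ i ∈ range #s, kernel lam i k) := by
  intro t
  obtain rfl | hpos := eq_zero_or_pos lam
  · by_cases h0 : 0 ∈ s
    · simp [kernel_zero_left, h0, card_pos.2 ⟨0, h0⟩]
    · simp [kernel_zero_left, h0]
  obtain ⟨M, htM⟩ := exists_nat_subset_range t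
  have hmM : range #t ⊆ range M := range_subset_range.2 (by simpa using card_le_card htM)
  refine le_of_mul_le_mul_left ?_ hpos
  rw [mul_sum_sum_kernel_eq_sum_powerset hlam s htM,
    mul_sum_sum_kernel_eq_sum_powerset hlam _ hmM]
  calc ∑ A ∈ (range M).powerset,
        bernoulliWeight lam (range M) A * #{k ∈ t | k ∈ A ∧ #(A ∩ range k) ∈ s}
      ≤ ∑ A ∈ (range M).powerset,
          bernoulliWeight lam (range M) A * (min #s #(A ∩ t) : ℕ) := by
        gcongr with A
        exact card_filter_mem_card_inter_range_mem_le A t s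
    _ = ∑ A ∈ (range M).powerset,
          bernoulliWeight lam (range M) A * (min #s #(A ∩ range #t) : ℕ) :=
        sum_powerset_bernoulliWeight_mul_card_inter hlam htM hmM (card_range _).symm
          fun j => (min #s j : ℕ)
    _ = _ := by simp_rw [card_filter_mem_card_inter_range_lt]

noncomputable def thinning (lam : ℝ≥0) (x : ℕ → ℝ≥0) (i : ℕ) : ℝ≥0 :=
  ∑' k, kernel lam i k * x k

theorem summable_kernel_mul (hlam : lam ≤ 1) {y : ℕ → ℝ≥0} (hy : Summable y) (i : ℕ) :
    Summable fun k => kernel lam i k * y k :=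
  NNReal.summable_of_le (fun k => mul_le_of_le_one_left zero_le (kernel_le_one hlam i k)) hy

theorem sum_thinning (hlam : lam ≤ 1) {y : ℕ → ℝ≥0} (hy : Summable y) (s : Finset ℕ) :
    ∑ i ∈ s, thinning lam y i = ∑' k, y k * ∑ i ∈ s, kernel lam i k := by
  simp only [thinning]
  rw [← Summable.tsum_finsetSum fun i _ => summable_kernel_mul hlam hy i]
  simp_rw [mul_sum, mul_comm]

theorem tsum_thinning (hlam : lam ≤ 1) {y : ℕ → ℝ≥0} (hy : Summable y) :
    ∑' i, thinning lam y i = ∑' k, y k := by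
  have hkernel (k : ℕ) : ∑' i, (kernel lam i k : ℝ≥0∞) = 1 := by
    rw [tsum_eq_sum (s := range (k + 1)) fun i hi => by
        rw [kernel_eq_zero_of_lt (by simp at hi; omega), ENNReal.coe_zero],
      ← ENNReal.ofNNReal_finsetSum, sum_range_kernel hlam, ENNReal.coe_one]
  rw [NNReal.tsum_eq_toNNReal_tsum, NNReal.tsum_eq_toNNReal_tsum (f := y)]
  simp_rw [thinning, ENNReal.coe_tsum (summable_kernel_mul hlam hy _), ENNReal.coe_mul]
  rw [ENNReal.tsum_comm]
  simp_rw [ENNReal.tsum_mul_right, hkernel, one_mul]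

theorem WeaklyMajorizedBy.thinning (hlam : lam ≤ 1) {x y : ℕ → ℝ≥0} (hx : Summable x)
    (hy : Summable y) (hxy : WeaklyMajorizedBy x y) :
    WeaklyMajorizedBy (thinning lam x) (thinning lam y) := by
  intro s
  rw [sum_thinning hlam hx, sum_thinning hlam hy]
  have hyv : Summable fun k => y k * ∑ i ∈ range #s, kernel lam i k :=
    NNReal.summable_of_le
      (fun k => mul_le_of_le_one_right zero_le (sum_kernel_le_one hlam _ k)) hy
  refine tsum_le_of_sum_le' zero_le fun t => ?_
  calc ∑ k ∈ t, x k * ∑ i ∈ s, kernel lam i k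
      ≤ ∑ j ∈ range #t, y j * ∑ i ∈ range #s, kernel lam i j :=
        hxy.sum_mul_le (weaklyMajorizedBy_sum_kernel hlam s) (antitone_sum_range_kernel hlam #s) t
    _ ≤ _ := Summable.sum_le_tsum _ (fun _ _ => zero_le) hyv

def PartialSumsEqSupSums (x xd : ℕ → ℝ≥0) : Prop :=
  ∀ n, ∑ i ∈ range n, xd i = ⨆ s : {s : Finset ℕ // #s = n}, ∑ i ∈ s.1, x i

namespace PartialSumsEqSupSums

variable {x xd : ℕ → ℝ≥0}

theorem weaklyMajorizedBy (hrear : PartialSumsEqSupSums x xd) (hx : Summable x) :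
    WeaklyMajorizedBy x xd := fun u => by
  rw [hrear]
  refine le_ciSup (f := fun s : {s : Finset ℕ // #s = #u} => ∑ i ∈ s.1, x i) ?_ ⟨u, rfl⟩
  exact ⟨∑' k, x k,
    Set.forall_mem_range.2 fun s => Summable.sum_le_tsum _ (fun _ _ => zero_le) hx⟩

theorem sum_range_le_tsum (hrear : PartialSumsEqSupSums x xd) (hx : Summable x) (n : ℕ) :
    ∑ i ∈ range n, xd i ≤ ∑' k, x k := by
  rw [hrear]
  exact ciSup_le' fun s => Summable.sum_le_tsum _ (fun _ _ => zero_le) hx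

theorem tsum_eq (hrear : PartialSumsEqSupSums x xd) (hx : Summable x) :
    ∑' k, xd k = ∑' k, x k := by
  have hbound := hrear.sum_range_le_tsum hx
  refine le_antisymm (NNReal.tsum_le_of_sum_range_le hbound)
    (tsum_le_of_sum_le' zero_le fun u => ?_)
  exact (hrear.weaklyMajorizedBy hx u).trans
    (Summable.sum_le_tsum _ (fun _ _ => zero_le) (NNReal.summable_of_sum_range_le hbound))

end PartialSumsEqSupSums

end Thinning

theorem thinning_fock_optimal_general (x : ℕ → NNReal) (hx : Summable x)
    (xd : ℕ → NNReal)
    (hrear : ∀ n, ∑ i ∈ Finset.range n, xd i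
      = ⨆ s : {s : Finset ℕ // s.card = n}, ∑ i ∈ s.1, x i)
    (lam : NNReal) (hlam : lam ≤ 1) :
    (∀ n, ∀ s : Finset ℕ, s.card = n →
        ∑ i ∈ s, (∑' k, (Nat.choose k i : NNReal) * lam ^ i * (1 - lam) ^ (k - i) * x k)
          ≤ ∑ i ∈ Finset.range n,
              (∑' k, (Nat.choose k i : NNReal) * lam ^ i * (1 - lam) ^ (k - i) * xd k))
    ∧ (∑' i, ∑' k, (Nat.choose k i : NNReal) * lam ^ i * (1 - lam) ^ (k - i) * x k)
        = ∑' i, ∑' k, (Nat.choose k i : NNReal) * lam ^ i * (1 - lam) ^ (k - i) * xd k := by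
  open Thinning in
  have hrear : PartialSumsEqSupSums x xd := hrear
  have hxd : Summable xd :=
    NNReal.summable_of_sum_range_le (hrear.sum_range_le_tsum hx)
  have hmaj : WeaklyMajorizedBy (thinning lam x) (thinning lam xd) :=
    (hrear.weaklyMajorizedBy hx).thinning hlam hx hxd
  refine ⟨fun n s hs => hs ▸ hmaj s, ?_⟩
  change ∑' i, thinning lam x i = ∑' i, thinning lam xd i
  rw [tsum_thinning hlam hx, tsum_thinning hlam hxd, hrear.tsum_eq hx]

/-- Fock-optimality of the thinning: `T_λ(x)` is majorized by `T_λ(x↓)`, where `x↓` is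
the decreasing rearrangement of `x` (characterized by antitonicity together with its
partial sums being the suprema of sums of `x` over finite index sets of given
cardinality). Majorization is expressed via sums over arbitrary finite index sets on the
left, whose supremum yields the partial sums of the decreasing rearrangement of
`T_λ(x)`, together with equality of the total sums. -/
theorem thinning_fock_optimal (x : ℕ → NNReal) (hx : Summable x)
    (xd : ℕ → NNReal) (hxd : Antitone xd)
    (hrear : ∀ n, ∑ i ∈ Finset.range n, xd i
      = ⨆ s : {s : Finset ℕ // s.card = n}, ∑ i ∈ s.1, x i)
    (lam : NNReal) (hlam : lam ≤ 1) :
    (∀ n, ∀ s : Finset ℕ, s.card = n →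
        ∑ i ∈ s, (∑' k, (Nat.choose k i : NNReal) * lam ^ i * (1 - lam) ^ (k - i) * x k)
          ≤ ∑ i ∈ Finset.range n,
              (∑' k, (Nat.choose k i : NNReal) * lam ^ i * (1 - lam) ^ (k - i) * xd k))
    ∧ (∑' i, ∑' k, (Nat.choose k i : NNReal) * lam ^ i * (1 - lam) ^ (k - i) * x k)
        = ∑' i, ∑' k, (Nat.choose k i : NNReal) * lam ^ i * (1 - lam) ^ (k - i) * xd k :=
  thinning_fock_optimal_general x hx xd hrear lam hlam
end

section
/- Let s, s↓ : [0,∞) → ℝ^{N+1} with s continuous, s(0) = s↓(0), s_N(t) = s↓_N(t) for all t, (s↓)_n'(t) = (n+1)(s↓_{n+1}(t) − s↓_n(t)) for n < N, and s_n'(t) ≤ (n+1)(s_{n+1}(t) − s_n(t)) for n < N wherever s is differentiable (assume differentiable everywhere). Then s_n(t) ≤ s↓_n(t) for all t ≥ 0 and all n = 0,…,N. -/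
/-!
Downward induction on `n`, starting from the common top component `s_N = s↓_N`. If
`s_{n+1} ≤ s↓_{n+1}`, the difference `u = s_n - s↓_n` satisfies `u' ≤ -(n+1) u` and
`u(0) = 0`, so `u(t) e^{(n+1)t}` is antitone and `u ≤ 0`.
-/

open Real Set

theorem nonpos_of_hasDerivAt_le_neg_mul {u u' : ℝ → ℝ} {a : ℝ} (c : ℝ)
    (hu : ∀ t, a ≤ t → HasDerivAt u (u' t) t) (hle : ∀ t, a ≤ t → u' t ≤ -c * u t)
    (ha : u a ≤ 0) : ∀ t, a ≤ t → u t ≤ 0 := by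
  set g : ℝ → ℝ := fun τ => u τ * exp (c * τ)
  have hg : ∀ t, a ≤ t → HasDerivAt g ((u' t + c * u t) * exp (c * t)) t := fun t ht =>
    ((hu t ht).mul ((hasDerivAt_id' t).const_mul c).exp).congr_deriv (by ring)
  have hanti : AntitoneOn g (Ici a) := by
    refine antitoneOn_of_hasDerivWithinAt_nonpos (convex_Ici a)
      (fun t ht => (hg t ht).continuousAt.continuousWithinAt)
      (fun t ht => (hg t (interior_subset ht)).hasDerivWithinAt) fun t ht => ?_
    have : u' t + c * u t ≤ 0 := by linarith [hle t (interior_subset ht)]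
    exact mul_nonpos_of_nonpos_of_nonneg this (exp_pos _).le
  intro t ht
  have hgt : g t ≤ g a := hanti self_mem_Ici ht ht
  have : u t * exp (c * t) ≤ 0 := hgt.trans (mul_nonpos_of_nonpos_of_nonneg ha (exp_pos _).le)
  exact nonpos_of_mul_nonpos_left this (exp_pos _)

theorem le_of_hasDerivAt_le_mul_sub {u v u₁ v₁ u' : ℝ → ℝ} {a c : ℝ} (hc : 0 ≤ c)
    (hu : ∀ t, a ≤ t → HasDerivAt u (u' t) t)
    (hu' : ∀ t, a ≤ t → u' t ≤ c * (u₁ t - u t))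
    (hv : ∀ t, a ≤ t → HasDerivAt v (c * (v₁ t - v t)) t)
    (ha : u a ≤ v a) (h₁ : ∀ t, a ≤ t → u₁ t ≤ v₁ t) :
    ∀ t, a ≤ t → u t ≤ v t := by
  have hdiff := nonpos_of_hasDerivAt_le_neg_mul (u := u - v) c
    (fun t ht => (hu t ht).sub (hv t ht))
    (fun t ht => by
      have := mul_le_mul_of_nonneg_left (h₁ t ht) hc
      simp only [Pi.sub_apply]
      linarith [hu' t ht])
    (sub_nonpos.2 ha)
  exact fun t ht => sub_nonpos.1 (hdiff t ht)

/-- Key comparison lemma for Fock-optimality of the attenuator: if `s` and `s↓` have the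
same initial data, the same top component, `s↓` solves `(s↓)_n' = (n+1)(s↓_{n+1} - s↓_n)`
and `s` satisfies the corresponding differential inequality, then `s_n(t) ≤ s↓_n(t)` for
all `t ≥ 0` and `n ≤ N`. -/
theorem attenuator_comparison (N : ℕ) (s sd : ℝ → ℕ → ℝ) (d : ℕ → ℝ → ℝ)
    (hsder : ∀ n < N, ∀ t : ℝ, 0 ≤ t → HasDerivAt (fun τ => s τ n) (d n t) t)
    (hsineq : ∀ n < N, ∀ t : ℝ, 0 ≤ t → d n t ≤ (n + 1) * (s t (n + 1) - s t n))
    (hsdder : ∀ n < N, ∀ t : ℝ, 0 ≤ t →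
        HasDerivAt (fun τ => sd τ n) ((n + 1) * (sd t (n + 1) - sd t n)) t)
    (h0 : ∀ n ≤ N, s 0 n = sd 0 n)
    (htopeq : ∀ t : ℝ, 0 ≤ t → s t N = sd t N) :
    ∀ t : ℝ, 0 ≤ t → ∀ n ≤ N, s t n ≤ sd t n := by
  intro t ht n hn
  induction hn using Nat.decreasingInduction generalizing t with
  | self => exact (htopeq t ht).le
  | of_succ n hn ih =>
    exact le_of_hasDerivAt_le_mul_sub (by positivity) (hsder n hn) (hsineq n hn)
      (hsdder n hn) (h0 n hn.le).le ih t ht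
end

section
/- A positive semidefinite Hermitian n×n matrix X is diagonal in the standard basis with decreasing diagonal entries if and only if for every orthogonal projection P, trace(P·X) ≤ trace(P↓·X), where P↓ is the projection onto the span of the first rank(P) standard basis vectors. -/
/-! For `X = diagonal d` the left-hand side is `∑ Pᵢᵢ dᵢ` with weights `0 ≤ Pᵢᵢ ≤ 1` summing to
`rank P`, and for decreasing `d` such a weighted sum is largest when the weight sits on the first
`rank P` indices. Conversely, adding to the projection onto `e₀, …, e_{i-1}` the projection onto a
line in the span of `eᵢ, eᵢ₊₁, …` gives a projection of rank `i + 1`, so the criterion says that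
`v ↦ ⟪v, X v⟫ / ‖v‖²` is maximised on that span at `eᵢ`. Taking `v = eⱼ` orders the diagonal, and
perturbing `eᵢ` towards `eⱼ` shows `Xᵢⱼ = 0`. -/

open ComplexOrder Matrix Finset

theorem Finset.exists_separating_of_forall_le {ι : Type*} [Fintype ι] (s : Finset ι)
    {d : ι → ℝ} (hd : ∀ i ∈ s, ∀ j ∉ s, d j ≤ d i) :
    ∃ c, (∀ i ∈ s, c ≤ d i) ∧ ∀ j ∉ s, d j ≤ c := by
  classical
  rcases sᶜ.eq_empty_or_nonempty with hs | hs
  · obtain ⟨c, hc⟩ := (Set.finite_range d).bddBelow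
    exact ⟨c, fun i _ => hc ⟨i, rfl⟩, fun j hj => absurd (mem_compl.mpr hj) (by simp [hs])⟩
  · exact ⟨sᶜ.sup' hs d, fun i hi => sup'_le _ _ fun j hj => hd i hi j (mem_compl.mp hj),
      fun j hj => le_sup' d (mem_compl.mpr hj)⟩

theorem Finset.sum_mul_le_sum_of_sum_eq_card {ι : Type*} [Fintype ι] [DecidableEq ι]
    (s : Finset ι) {p d : ι → ℝ} (hp0 : ∀ i, 0 ≤ p i) (hp1 : ∀ i, p i ≤ 1)
    (hps : ∑ i, p i = #s) (hd : ∀ i ∈ s, ∀ j ∉ s, d j ≤ d i) :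
    ∑ i, p i * d i ≤ ∑ i ∈ s, d i := by
  obtain ⟨c, hcs, hcsc⟩ := s.exists_separating_of_forall_le hd
  have hterm : ∀ i, (p i - if i ∈ s then 1 else 0) * (d i - c) ≤ 0 := by
    intro i
    split_ifs with hi
    · exact mul_nonpos_of_nonpos_of_nonneg (by linarith [hp1 i]) (by linarith [hcs i hi])
    · exact mul_nonpos_of_nonneg_of_nonpos (by linarith [hp0 i]) (by linarith [hcsc i hi])
  have hexpand : ∑ i, (p i - if i ∈ s then 1 else 0) * (d i - c) =
      ∑ i, p i * d i - ∑ i ∈ s, d i := by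
    simp only [sub_mul, mul_sub, sum_sub_distrib, ← sum_mul, hps, ite_mul, one_mul, zero_mul,
      sum_ite_mem, univ_inter]
    simp
  linarith [sum_nonpos fun i (_ : i ∈ univ) => hterm i]

namespace Matrix

variable {ι K : Type*} [Fintype ι]

theorem trace_eq_rank_of_isIdempotentElem_s16 [DecidableEq ι] [Field K] {P : Matrix ι ι K}
    (hP : IsIdempotentElem P) : P.trace = P.rank := by
  have hP' : IsIdempotentElem P.toLin' := hP.map Matrix.toLinAlgEquiv'
  rw [← trace_toLin'_eq, (LinearMap.IsIdempotentElem.isProj_range _ hP').trace]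
  rfl

theorem IsHermitian.diag_mem_Icc_of_isIdempotentElem [DecidableEq ι] [Ring K] [PartialOrder K]
    [StarRing K] [StarOrderedRing K] {P : Matrix ι ι K} (hPH : P.IsHermitian)
    (hPI : IsIdempotentElem P) (i : ι) : 0 ≤ P i i ∧ P i i ≤ 1 := by
  -- an orthogonal projection `Q` is `Qᴴ * Q`, and `1 - P` is one too
  have hdiag : ∀ Q : Matrix ι ι K, Q.IsHermitian → IsIdempotentElem Q → ∀ k, 0 ≤ Q k k :=
    fun Q hQH hQI k => by
      simpa [hQH.eq, hQI.eq] using (posSemidef_conjTranspose_mul_self Q).diag_nonneg (i := k)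
  refine ⟨hdiag P hPH hPI i, ?_⟩
  simpa using hdiag (1 - P) (isHermitian_one.sub hPH) hPI.one_sub i

section DiagonalIndicator

variable [DecidableEq ι] [NonAssocSemiring K] (p : ι → Prop) [DecidablePred p]

omit [Fintype ι] in
theorem isHermitian_diagonal_ite [StarRing K] :
    (diagonal (fun i => if p i then (1 : K) else 0)).IsHermitian :=
  isHermitian_diagonal_of_self_adjoint _ <| by
    ext i; split_ifs <;> simp [*]

theorem isIdempotentElem_diagonal_ite :
    IsIdempotentElem (diagonal (fun i => if p i then (1 : K) else 0)) := by
  rw [IsIdempotentElem, diagonal_mul_diagonal]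
  congr 1; ext i; split_ifs <;> simp

theorem trace_diagonal_ite : trace (diagonal (fun i => if p i then (1 : K) else 0)) =
    #(univ.filter p) := by
  simp [trace_diagonal, sum_boole]

theorem trace_diagonal_ite_mul (X : Matrix ι ι K) :
    trace (diagonal (fun i => if p i then 1 else 0) * X) = ∑ i ∈ univ.filter p, X i i := by
  simp [trace, diagonal_mul, ite_mul, sum_filter]

end DiagonalIndicator

noncomputable def lineProj [Field K] [StarRing K] (v : ι → K) : Matrix ι ι K :=
  (star v ⬝ᵥ v)⁻¹ • vecMulVec v (star v)

section LineProj

variable [Field K] [StarRing K] (v : ι → K)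

theorem isHermitian_lineProj : (lineProj v).IsHermitian := by
  rw [IsHermitian, lineProj, conjTranspose_smul, conjTranspose_vecMulVec, star_star, star_inv₀,
    ← star_dotProduct]

theorem isIdempotentElem_lineProj (hv : star v ⬝ᵥ v ≠ 0) : IsIdempotentElem (lineProj v) := by
  rw [IsIdempotentElem, lineProj, smul_mul_smul_comm, vecMulVec_mul_vecMulVec, vecMulVec_smul,
    smul_smul, mul_assoc, inv_mul_cancel₀ hv, mul_one]

theorem trace_lineProj (hv : star v ⬝ᵥ v ≠ 0) : trace (lineProj v) = 1 := by
  rw [lineProj, trace_smul, trace_vecMulVec, smul_eq_mul, dotProduct_comm v, inv_mul_cancel₀ hv]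

theorem trace_lineProj_mul (X : Matrix ι ι K) :
    trace (lineProj v * X) = (star v ⬝ᵥ v)⁻¹ * (star v ⬝ᵥ X *ᵥ v) := by
  rw [lineProj, smul_mul, trace_smul, vecMulVec_mul, trace_vecMulVec, smul_eq_mul,
    dotProduct_mulVec, dotProduct_comm v]

theorem IsHermitian.isIdempotentElem_add_lineProj {Q : Matrix ι ι K} (hQH : Q.IsHermitian)
    (hQI : IsIdempotentElem Q) (hv : star v ⬝ᵥ v ≠ 0) (hQv : Q *ᵥ v = 0) :
    IsIdempotentElem (Q + lineProj v) := by
  have hQR : Q * lineProj v = 0 := by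
    rw [lineProj, Matrix.mul_smul, mul_vecMulVec, hQv]
    simp
  have hRQ : lineProj v * Q = 0 := by
    rw [← (isHermitian_lineProj v).eq, ← hQH.eq, ← conjTranspose_mul, hQR, conjTranspose_zero]
  exact hQI.add (isIdempotentElem_lineProj v hv) (by rw [hQR, hRQ, add_zero])

end LineProj

theorem IsHermitian.apply_eq_zero_of_forall_re_le [DecidableEq ι] {X : Matrix ι ι ℂ}
    (hX : X.IsHermitian) {i j : ι} (hij : i ≠ j)
    (h : ∀ z : ℂ, let v := Pi.single i 1 + Pi.single j z
      (star v ⬝ᵥ X *ᵥ v).re ≤ (X i i).re * (star v ⬝ᵥ v).re) :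
    X i j = 0 := by
  by_contra hc
  have hN : 0 < (X i j).re * (X i j).re + (X i j).im * (X i j).im := Complex.normSq_pos.mpr hc
  have hji : X j i = star (X i j) := (hX.apply j i).symm
  have hjj : 0 = (X j j).im := by simpa using congrArg Complex.im (hX.coe_re_apply_self j)
  set D := (X i i).re - (X j j).re
  set t : ℝ := 1 / (|D| + 1)
  have ht : 0 < t := by positivity
  have htD : t * D < 1 := by
    rw [div_mul_eq_mul_div, one_mul, div_lt_one (by positivity)]
    linarith [le_abs_self D]
  -- with `z = t * conj (X i j)` the inequality reads `2 t |X i j|² ≤ t² |X i j|² D`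
  have hz := h ((t : ℂ) * star (X i j))
  simp only [star_add, Pi.star_single, mulVec_add, dotProduct_add, add_dotProduct,
    mulVec_single, single_dotProduct, dotProduct_single] at hz
  simp [hij, hij.symm, ← hjj, hji] at hz
  nlinarith [mul_pos (mul_pos ht hN) (sub_pos.mpr htD)]

omit [Fintype ι] in
theorem IsHermitian.eq_diagonal_of_forall_lt_apply_eq_zero [LinearOrder ι]
    {X : Matrix ι ι ℂ} (hX : X.IsHermitian) (h : ∀ i j, i < j → X i j = 0) :
    X = diagonal (fun i => ((X i i).re : ℂ)) := by
  ext k l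
  rcases lt_trichotomy k l with hkl | rfl | hlk
  · rw [h k l hkl, diagonal_apply_ne _ hkl.ne]
  · rw [diagonal_apply_eq]
    exact (hX.coe_re_apply_self k).symm
  · rw [diagonal_apply_ne _ hlk.ne', ← hX.apply, h l k hlk, star_zero]

end Matrix

theorem re_trace_mul_diagonal_le_of_antitone {n : ℕ} {d : Fin n → ℝ} (hd : Antitone d)
    {P : Matrix (Fin n) (Fin n) ℂ} (hPH : P.IsHermitian) (hPI : IsIdempotentElem P) :
    (trace (P * diagonal (fun i => (d i : ℂ)))).re ≤
      (trace (diagonal (fun i : Fin n => if (i : ℕ) < P.rank then (1 : ℂ) else 0) *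
        diagonal (fun i => (d i : ℂ)))).re := by
  have hcard : #(univ.filter fun i : Fin n => (i : ℕ) < P.rank) = P.rank := by
    rw [Fin.card_filter_val_lt, min_eq_right (rank_le_width P)]
  have hsum : ∑ i, (P i i).re = P.rank := by
    simpa [trace, Complex.re_sum] using congrArg Complex.re (trace_eq_rank_of_isIdempotentElem_s16 hPI)
  have hbounds := hPH.diag_mem_Icc_of_isIdempotentElem hPI
  rw [trace_diagonal_ite_mul]
  simp only [diagonal_apply_eq, trace, diag_apply, mul_diagonal, Complex.re_sum,
    Complex.ofReal_re, Complex.re_mul_ofReal]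
  refine sum_mul_le_sum_of_sum_eq_card _ (fun i => (Complex.nonneg_iff.mp (hbounds i).1).1)
    (fun i => (Complex.le_def.mp (hbounds i).2).1) (hsum.trans (congrArg _ hcard.symm)) ?_
  intro i hi j hj
  simp only [mem_filter, mem_univ, true_and, not_lt] at hi hj
  exact hd (Fin.le_def.mpr (by omega))

section ProjectionCriterion

variable {n : ℕ} {X : Matrix (Fin n) (Fin n) ℂ}
  (h : ∀ P : Matrix (Fin n) (Fin n) ℂ, P.IsHermitian → P * P = P →
    (trace (P * X)).re ≤
      (trace (diagonal (fun i : Fin n => if (i : ℕ) < P.rank then (1 : ℂ) else 0) * X)).re)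
include h

theorem re_dotProduct_mulVec_le_of_forall_trace_le (i : Fin n) {v : Fin n → ℂ}
    (hv : ∀ k < i, v k = 0) :
    (star v ⬝ᵥ X *ᵥ v).re ≤ (X i i).re * (star v ⬝ᵥ v).re := by
  rcases eq_or_ne v 0 with rfl | hv0
  · simp
  have hvv : 0 < star v ⬝ᵥ v := dotProduct_star_self_pos_iff.mpr hv0
  set Q := diagonal (fun k : Fin n => if (k : ℕ) < i then (1 : ℂ) else 0)
  have hQH : Q.IsHermitian := isHermitian_diagonal_ite _
  have hQv : Q *ᵥ v = 0 := by
    ext k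
    simp only [Q, mulVec_diagonal, Pi.zero_apply]
    split_ifs with hk
    · simp [hv k hk]
    · simp
  have hPI := hQH.isIdempotentElem_add_lineProj v (isIdempotentElem_diagonal_ite _) hvv.ne' hQv
  have hrank : (Q + lineProj v).rank = i + 1 := by
    have := trace_eq_rank_of_isIdempotentElem_s16 hPI
    rw [trace_add, trace_lineProj v hvv.ne', trace_diagonal_ite, Fin.card_filter_val_lt,
      min_eq_right i.is_lt.le] at this
    exact_mod_cast this.symm
  have hsplit : univ.filter (fun k : Fin n => (k : ℕ) < i + 1) =
      insert i (univ.filter (fun k : Fin n => (k : ℕ) < i)) := by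
    ext k; simp [Fin.ext_iff]; omega
  obtain ⟨r, hr⟩ : ∃ r : ℝ, star v ⬝ᵥ v = r := ⟨_, Complex.eq_re_of_ofReal_le (r := 0) hvv.le⟩
  have hr0 : 0 < r := by simpa [hr] using hvv
  have := h _ (hQH.add (isHermitian_lineProj v)) hPI
  rw [hrank, add_mul, trace_add, trace_lineProj_mul, trace_diagonal_ite_mul,
    trace_diagonal_ite_mul, hsplit, sum_insert (by simp), add_comm (X i i), Complex.add_re,
    Complex.add_re, add_le_add_iff_left, hr, ← Complex.ofReal_inv, Complex.re_ofReal_mul,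
    inv_mul_le_iff₀ hr0] at this
  rw [hr, Complex.ofReal_re, mul_comm]
  exact this

theorem antitone_re_diag_of_forall_trace_le : Antitone fun i => (X i i).re := by
  intro i j hij
  rcases hij.eq_or_lt with rfl | hij
  · rfl
  have := re_dotProduct_mulVec_le_of_forall_trace_le h i (v := Pi.single j 1)
    fun k hk => Pi.single_eq_of_ne (hk.trans hij).ne _
  simpa [mulVec_single] using this

theorem apply_eq_zero_of_forall_trace_le (hX : X.IsHermitian) {i j : Fin n} (hij : i < j) :
    X i j = 0 :=
  hX.apply_eq_zero_of_forall_re_le hij.ne fun _ =>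
    re_dotProduct_mulVec_le_of_forall_trace_le h i fun k hk => by
      simp [Pi.single_eq_of_ne hk.ne, Pi.single_eq_of_ne (hk.trans hij).ne]

end ProjectionCriterion

/-- Characterization of passive matrices: a positive semidefinite Hermitian matrix `X`
is diagonal in the standard basis with decreasing diagonal entries iff for every
orthogonal projection `P`, `trace (P * X) ≤ trace (P↓ * X)`, where `P↓` projects onto
the first `rank P` standard basis vectors. -/
theorem passive_iff_projection_criterion (n : ℕ) (X : Matrix (Fin n) (Fin n) ℂ)
    (hX : X.PosSemidef) :
    (∃ d : Fin n → ℝ, Antitone d ∧ X = Matrix.diagonal (fun i => (d i : ℂ))) ↔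
      ∀ P : Matrix (Fin n) (Fin n) ℂ, P.IsHermitian → P * P = P →
        (Matrix.trace (P * X)).re ≤
          (Matrix.trace (Matrix.diagonal
            (fun i : Fin n => if (i : ℕ) < P.rank then (1 : ℂ) else 0) * X)).re := by
  constructor
  · rintro ⟨d, hd, rfl⟩ P hPH hPI
    exact re_trace_mul_diagonal_le_of_antitone hd hPH hPI
  · intro h
    exact ⟨_, antitone_re_diag_of_forall_trace_le h,
      hX.isHermitian.eq_diagonal_of_forall_lt_apply_eq_zero
        fun _ _ hij => apply_eq_zero_of_forall_trace_le h hX.isHermitian hij⟩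
end

section
/- Let Φ be a linear map on n×n complex matrices that is positive and trace-preserving, and suppose that for all orthogonal projections P, Q one has trace(Q·Φ(P)) ≤ trace(Q↓·Φ(P↓)), where R↓ denotes the projection onto the first rank(R) standard basis vectors. Then for every positive semidefinite X and every projection Q, trace(Q·Φ(X)) ≤ trace(Q↓·Φ(X↓)), where X↓ is the diagonal matrix of eigenvalues of X in decreasing order. -/
/-!
Diagonalise `X = V diag(x) V*` with `x` decreasing and nonnegative. The layer-cake formula
`diag(x) = ∑ₖ (xₖ - xₖ₊₁) Πₖ₊₁`, where `Πⱼ` projects onto the first `j` basis vectors and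
`xₙ := 0`, has nonnegative weights, and conjugation by `V` turns `Πₖ₊₁` into a projection `Pₖ`
of rank `k + 1`, so that `Pₖ↓ = Πₖ₊₁`. Both sides of the inequality are real-linear in the
layers, hence it is the nonnegative combination of the projector criterion for the pairs `Pₖ, Q`.
-/

open ComplexOrder Matrix

open Finset Unitary

section LayerGap

variable {R : Type*} {n : ℕ}

def extendByZero [Zero R] (x : Fin n → R) (m : ℕ) : R :=
  if h : m < n then x ⟨m, h⟩ else 0

def layerGap [AddGroup R] (x : Fin n → R) (k : ℕ) : R :=
  extendByZero x k - extendByZero x (k + 1)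

theorem sum_Ico_layerGap [AddCommGroup R] (x : Fin n → R) (i : Fin n) :
    ∑ k ∈ Ico (i : ℕ) n, layerGap x k = x i := by
  calc ∑ k ∈ Ico (i : ℕ) n, layerGap x k
      = -∑ k ∈ Ico (i : ℕ) n, (extendByZero x (k + 1) - extendByZero x k) := by
        simp only [layerGap, ← sum_neg_distrib, neg_sub]
    _ = extendByZero x i - extendByZero x n := by rw [sum_Ico_sub _ i.isLt.le, neg_sub]
    _ = x i := by simp [extendByZero]

theorem layerGap_nonneg [AddCommGroup R] [PartialOrder R] [IsOrderedAddMonoid R]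
    {x : Fin n → R} (hx : Antitone x) (hx₀ : ∀ i, 0 ≤ x i) (k : ℕ) : 0 ≤ layerGap x k := by
  rw [layerGap, sub_nonneg, extendByZero, extendByZero]
  split_ifs with hsucc hk hk
  · exact hx (Fin.mk_le_mk.mpr k.le_succ)
  · omega
  · exact hx₀ _
  · rfl

theorem map_layerGap {S F : Type*} [AddGroup R] [AddGroup S] [FunLike F R S]
    [AddMonoidHomClass F R S] (f : F) (x : Fin n → R) (k : ℕ) :
    f (layerGap x k) = layerGap (f ∘ x) k := by
  simp only [layerGap, extendByZero, map_sub]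
  split_ifs <;> simp

end LayerGap

namespace Matrix

/-- The paper's `R↓` is `leadingProj ℂ n R.rank`. -/
def leadingProj (R : Type*) [Zero R] [One R] (n k : ℕ) : Matrix (Fin n) (Fin n) R :=
  diagonal fun i => if (i : ℕ) < k then 1 else 0

section leadingProj

variable {R : Type*} {n k : ℕ}

theorem isHermitian_leadingProj [Semiring R] [StarRing R] : (leadingProj R n k).IsHermitian := by
  rw [leadingProj, isHermitian_diagonal_iff]
  intro i
  split_ifs <;> simp

theorem isIdempotentElem_leadingProj [Semiring R] : IsIdempotentElem (leadingProj R n k) := by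
  rw [IsIdempotentElem, leadingProj, diagonal_mul_diagonal]
  congr 1
  ext i
  split_ifs <;> simp

theorem rank_leadingProj [Field R] (hk : k ≤ n) : (leadingProj R n k).rank = k := by
  classical
  rw [leadingProj, rank_diagonal, Fintype.card_subtype]
  simpa [hk] using Fin.card_filter_val_lt (n := n) (m := k)

theorem diagonal_eq_sum_layerGap_smul_leadingProj [Ring R] (x : Fin n → R) :
    diagonal x = ∑ k ∈ range n, layerGap x k • leadingProj R n (k + 1) := by
  ext i j
  rcases eq_or_ne i j with rfl | hij
  · have hfilter : {k ∈ range n | (i : ℕ) ≤ k} = Ico (i : ℕ) n := by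
      ext k
      simp only [mem_filter, mem_range, mem_Ico]
      omega
    simp [leadingProj, sum_apply, ← sum_filter, hfilter, sum_Ico_layerGap]
  · simp [leadingProj, sum_apply, hij]

end leadingProj

theorem rank_conjStarAlgAut {m S R : Type*} [Fintype m] [DecidableEq m] [CommRing R] [StarRing R]
    [SMul S (Matrix m m R)] [IsScalarTower S (Matrix m m R) (Matrix m m R)]
    [SMulCommClass S (Matrix m m R) (Matrix m m R)] (V : unitaryGroup m R) (A : Matrix m m R) :
    (conjStarAlgAut S _ V A).rank = A.rank := by
  rw [conjStarAlgAut_apply, ← Unitary.coe_star,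
    rank_mul_eq_left_of_isUnit_det _ _ (UnitaryGroup.det_isUnit (star V)),
    rank_mul_eq_right_of_isUnit_det _ _ (UnitaryGroup.det_isUnit V)]

theorem submatrix_id_mem_unitaryGroup {m α : Type*} [Fintype m] [DecidableEq m] [CommRing α]
    [StarRing α] {U : Matrix m m α} (hU : U ∈ unitaryGroup m α) (σ : Equiv.Perm m) :
    U.submatrix id σ ∈ unitaryGroup m α := by
  rw [mem_unitaryGroup_iff, star_eq_conjTranspose, conjTranspose_submatrix, submatrix_mul_equiv,
    ← star_eq_conjTranspose, mem_unitaryGroup_iff.mp hU, submatrix_id_id]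

theorem IsHermitian.exists_unitary_eq_conj_diagonal_comp {m 𝕜 : Type*} [Fintype m]
    [DecidableEq m] [RCLike 𝕜] {A : Matrix m m 𝕜} (hA : A.IsHermitian) (σ : Equiv.Perm m) :
    ∃ V : unitaryGroup m 𝕜,
      A = conjStarAlgAut 𝕜 _ V (diagonal (RCLike.ofReal ∘ hA.eigenvalues ∘ σ)) := by
  refine ⟨⟨_, submatrix_id_mem_unitaryGroup hA.eigenvectorUnitary.2 σ⟩, ?_⟩
  conv_lhs => rw [hA.spectral_theorem]
  rw [conjStarAlgAut_apply, conjStarAlgAut_apply, ← Function.comp_assoc,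
    ← submatrix_diagonal_equiv, star_eq_conjTranspose, star_eq_conjTranspose,
    conjTranspose_submatrix, submatrix_mul_equiv, submatrix_mul_equiv, submatrix_id_id]

theorem re_trace_mul_sum_ofReal_smul {m ι : Type*} [Fintype m] (Q : Matrix m m ℂ) (s : Finset ι)
    (c : ι → ℝ) (A : ι → Matrix m m ℂ) :
    (trace (Q * ∑ k ∈ s, (c k : ℂ) • A k)).re = ∑ k ∈ s, c k * (trace (Q * A k)).re := by
  simp only [mul_sum, mul_smul_comm, trace_sum, trace_smul, smul_eq_mul,
    Complex.re_sum, Complex.re_ofReal_mul]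

end Matrix

def ProjectorCriterion {n : ℕ} (Φ : Matrix (Fin n) (Fin n) ℂ →ₗ[ℂ] Matrix (Fin n) (Fin n) ℂ) :
    Prop :=
  ∀ P Q : Matrix (Fin n) (Fin n) ℂ, P.IsHermitian → IsIdempotentElem P → Q.IsHermitian →
    IsIdempotentElem Q →
      (trace (Q * Φ P)).re ≤ (trace (leadingProj ℂ n Q.rank * Φ (leadingProj ℂ n P.rank))).re

theorem ProjectorCriterion.re_trace_mul_map_conj_diagonal_le {n : ℕ}
    {Φ : Matrix (Fin n) (Fin n) ℂ →ₗ[ℂ] Matrix (Fin n) (Fin n) ℂ} (hΦ : ProjectorCriterion Φ)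
    {d : Fin n → ℝ} (hd : Antitone d) (hd₀ : ∀ i, 0 ≤ d i) (V : unitaryGroup (Fin n) ℂ)
    {Q : Matrix (Fin n) (Fin n) ℂ} (hQ : Q.IsHermitian) (hQQ : IsIdempotentElem Q) :
    (trace (Q * Φ (conjStarAlgAut ℂ _ V (diagonal fun i => (d i : ℂ))))).re ≤
      (trace (leadingProj ℂ n Q.rank * Φ (diagonal fun i => (d i : ℂ)))).re := by
  set conj := conjStarAlgAut ℂ (Matrix (Fin n) (Fin n) ℂ) V
  have hlayers : diagonal (fun i => (d i : ℂ)) =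
      ∑ k ∈ range n, ((layerGap d k : ℝ) : ℂ) • leadingProj ℂ n (k + 1) := by
    rw [diagonal_eq_sum_layerGap_smul_leadingProj]
    exact sum_congr rfl fun k _ => congrArg (· • _) (map_layerGap Complex.ofRealHom d k).symm
  simp only [hlayers, map_sum, map_smul, re_trace_mul_sum_ofReal_smul]
  refine sum_le_sum fun k hk => mul_le_mul_of_nonneg_left ?_ (layerGap_nonneg hd hd₀ k)
  have hrank : (conj (leadingProj ℂ n (k + 1))).rank = k + 1 := by
    rw [rank_conjStarAlgAut, rank_leadingProj (mem_range.mp hk)]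
  have hherm : (conj (leadingProj ℂ n (k + 1))).IsHermitian :=
    (isHermitian_iff_isSelfAdjoint.mp isHermitian_leadingProj).map conj
  simpa only [hrank] using
    hΦ _ Q hherm (isIdempotentElem_leadingProj.map conj) hQ hQQ

theorem projector_criterion_extends_general (n : ℕ)
    (Φ : Matrix (Fin n) (Fin n) ℂ →ₗ[ℂ] Matrix (Fin n) (Fin n) ℂ)
    (hproj : ∀ P Q : Matrix (Fin n) (Fin n) ℂ,
        P.IsHermitian → P * P = P → Q.IsHermitian → Q * Q = Q →
        (Matrix.trace (Q * Φ P)).re ≤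
          (Matrix.trace (Matrix.diagonal
              (fun i : Fin n => if (i : ℕ) < Q.rank then (1 : ℂ) else 0) *
            Φ (Matrix.diagonal
              (fun i : Fin n => if (i : ℕ) < P.rank then (1 : ℂ) else 0)))).re) :
    ∀ X : Matrix (Fin n) (Fin n) ℂ, ∀ hX : X.PosSemidef,
      ∀ x : Fin n → ℝ, Antitone x →
        (∃ σ : Equiv.Perm (Fin n), x = hX.1.eigenvalues ∘ σ) →
      ∀ Q : Matrix (Fin n) (Fin n) ℂ, Q.IsHermitian → Q * Q = Q →
        (Matrix.trace (Q * Φ X)).re ≤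
          (Matrix.trace (Matrix.diagonal
              (fun i : Fin n => if (i : ℕ) < Q.rank then (1 : ℂ) else 0) *
            Φ (Matrix.diagonal (fun i => (x i : ℂ))))).re := by
  rintro X hX x hx ⟨σ, rfl⟩ Q hQ hQQ
  obtain ⟨V, hXV⟩ := hX.1.exists_unitary_eq_conj_diagonal_comp σ
  replace hXV : X = conjStarAlgAut ℂ _ V (diagonal fun i => ((hX.1.eigenvalues ∘ σ) i : ℂ)) :=
    hXV
  have key := ProjectorCriterion.re_trace_mul_map_conj_diagonal_le hproj hx
    (fun i => hX.eigenvalues_nonneg (σ i)) V hQ hQQ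
  rwa [← hXV] at key

/-- If a positive trace-preserving linear map `Φ` satisfies the projector criterion
`trace (Q Φ(P)) ≤ trace (Q↓ Φ(P↓))` for all orthogonal projections `P`, `Q`, then for
every positive semidefinite `X` and every projection `Q`,
`trace (Q Φ(X)) ≤ trace (Q↓ Φ(X↓))`, where `X↓` is the diagonal matrix of the
eigenvalues of `X` in decreasing order. -/
theorem projector_criterion_extends (n : ℕ)
    (Φ : Matrix (Fin n) (Fin n) ℂ →ₗ[ℂ] Matrix (Fin n) (Fin n) ℂ)
    (hpos : ∀ X : Matrix (Fin n) (Fin n) ℂ, X.PosSemidef → (Φ X).PosSemidef)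
    (htr : ∀ X : Matrix (Fin n) (Fin n) ℂ, Matrix.trace (Φ X) = Matrix.trace X)
    (hproj : ∀ P Q : Matrix (Fin n) (Fin n) ℂ,
        P.IsHermitian → P * P = P → Q.IsHermitian → Q * Q = Q →
        (Matrix.trace (Q * Φ P)).re ≤
          (Matrix.trace (Matrix.diagonal
              (fun i : Fin n => if (i : ℕ) < Q.rank then (1 : ℂ) else 0) *
            Φ (Matrix.diagonal
              (fun i : Fin n => if (i : ℕ) < P.rank then (1 : ℂ) else 0)))).re) :
    ∀ X : Matrix (Fin n) (Fin n) ℂ, ∀ hX : X.PosSemidef,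
      ∀ x : Fin n → ℝ, Antitone x →
        (∃ σ : Equiv.Perm (Fin n), x = hX.1.eigenvalues ∘ σ) →
      ∀ Q : Matrix (Fin n) (Fin n) ℂ, Q.IsHermitian → Q * Q = Q →
        (Matrix.trace (Q * Φ X)).re ≤
          (Matrix.trace (Matrix.diagonal
              (fun i : Fin n => if (i : ℕ) < Q.rank then (1 : ℂ) else 0) *
            Φ (Matrix.diagonal (fun i => (x i : ℂ))))).re :=
  projector_criterion_extends_general n Φ hproj
end

section
/- Let a be the annihilation operator on ℂ^{N+1} defined by a·e_n = √n·e_{n−1} (a·e_0 = 0), and let Π_n↓ = ∑_{i=0}^n e_i e_i† be the projection onto the first n+1 standard basis vectors. Then for n ≥ k: trace(Π_n↓·a·Π_k↓·a† − Π_n↓·Π_k↓·a†a) = 0, and for k ≥ n+1: trace(Π_n↓·a·Π_k↓·a† − Π_n↓·Π_k↓·a†a) = n+1. -/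
/-!
Writing `Π_n↓ = diag w` and `Π_k↓ = diag v`, the trace equals
`∑ i j, (w i - w j) v j |a i j|²`. Since `a` lives on the superdiagonal with `|a i (i+1)|² = i + 1`,
only the differences `w i - w (i+1)` matter, and these are the indicator of `i = n`. Hence the trace
is `n + 1` when `e_{n+1}` exists and lies in the range of `Π_k↓`, and `0` otherwise.
-/

open Matrix

namespace Matrix

variable {ι R : Type*} [Fintype ι] [DecidableEq ι] [CommRing R] [StarRing R]

theorem trace_diagonal_mul_diagonal_mul_conjTranspose (a : Matrix ι ι R) (w v : ι → R) :
    trace (diagonal w * a * diagonal v * aᴴ) = ∑ i, ∑ j, w i * v j * (a i j * star (a i j)) := by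
  simp only [trace, diag_apply]
  refine Finset.sum_congr rfl fun i _ => ?_
  rw [mul_apply]
  simp only [mul_diagonal, diagonal_mul, conjTranspose_apply]
  exact Finset.sum_congr rfl fun j _ => by ring

theorem trace_diagonal_mul_conjTranspose_mul_self (a : Matrix ι ι R) (u : ι → R) :
    trace (diagonal u * (aᴴ * a)) = ∑ i, ∑ j, u j * (a i j * star (a i j)) := by
  simp only [trace, diag_apply, diagonal_mul]
  rw [Finset.sum_comm]
  refine Finset.sum_congr rfl fun j _ => ?_
  rw [mul_apply, Finset.mul_sum]
  exact Finset.sum_congr rfl fun i _ => by rw [conjTranspose_apply]; ring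

theorem trace_diagonal_mul_sub_diagonal_mul (a : Matrix ι ι R) (w v : ι → R) :
    trace (diagonal w * a * diagonal v * aᴴ - diagonal w * diagonal v * (aᴴ * a)) =
      ∑ i, ∑ j, (w i - w j) * v j * (a i j * star (a i j)) := by
  rw [trace_sub, diagonal_mul_diagonal, trace_diagonal_mul_diagonal_mul_conjTranspose,
    trace_diagonal_mul_conjTranspose_mul_self, ← Finset.sum_sub_distrib]
  refine Finset.sum_congr rfl fun i _ => ?_
  rw [← Finset.sum_sub_distrib]
  exact Finset.sum_congr rfl fun j _ => by ring

end Matrix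

theorem Fin.sum_sum_ite_val_add_one_eq {M : Type*} [AddCommMonoid M] {N : ℕ}
    (f : Fin (N + 1) → Fin (N + 1) → M) :
    ∑ i : Fin (N + 1), ∑ j : Fin (N + 1), (if (i : ℕ) + 1 = j then f i j else 0) =
      ∑ i : Fin N, f i.castSucc i.succ := by
  rw [Finset.sum_comm, Fin.sum_univ_succ]
  have hsucc (i : Fin (N + 1)) (j : Fin N) : (i : ℕ) + 1 = j.succ ↔ i = j.castSucc := by
    simp [Fin.ext_iff]
  simp only [Fin.val_zero, Nat.add_one_ne_zero, if_false, Finset.sum_const_zero, zero_add, hsucc,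
    Finset.sum_ite_eq', Finset.mem_univ, if_true]

noncomputable def annihilation (N : ℕ) : Matrix (Fin (N + 1)) (Fin (N + 1)) ℂ :=
  of fun i j => if (i : ℕ) + 1 = (j : ℕ) then (Real.sqrt (j : ℕ) : ℂ) else 0

def lowerProjection (N m : ℕ) : Matrix (Fin (N + 1)) (Fin (N + 1)) ℂ :=
  diagonal fun i => if (i : ℕ) ≤ m then 1 else 0

theorem annihilation_mul_star_self (N : ℕ) (i j : Fin (N + 1)) :
    annihilation N i j * star (annihilation N i j) =
      if (i : ℕ) + 1 = j then ((j : ℕ) : ℂ) else 0 := by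
  rw [annihilation, of_apply]
  split_ifs
  · rw [Complex.star_def, Complex.conj_ofReal, ← Complex.ofReal_mul,
      Real.mul_self_sqrt (Nat.cast_nonneg _), Complex.ofReal_natCast]
  · simp

theorem indicator_le_sub_indicator_add_one_le (n i : ℕ) :
    ((if i ≤ n then (1 : ℂ) else 0) - if i + 1 ≤ n then 1 else 0) = if i = n then 1 else 0 := by
  by_cases hin : i = n
  · simp [hin]
  · by_cases hi : i < n
    · simp [hin, hi.le, Nat.succ_le_of_lt hi]
    · simp [hin, show ¬ i ≤ n by omega, show ¬ i + 1 ≤ n by omega]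

theorem trace_lowerProjection_annihilation (N n k : ℕ) :
    let a := annihilation N
    let P := lowerProjection N
    trace (P n * a * P k * aᴴ - P n * P k * (aᴴ * a)) =
      if n < N ∧ n + 1 ≤ k then (n + 1 : ℂ) else 0 := by
  intro a P
  simp only [P, lowerProjection]
  rw [trace_diagonal_mul_sub_diagonal_mul]
  simp only [a, annihilation_mul_star_self, mul_ite ((_ : ℕ) + 1 = _), mul_zero]
  rw [Fin.sum_sum_ite_val_add_one_eq]
  simp only [Fin.val_castSucc, Fin.val_succ, indicator_le_sub_indicator_add_one_le, ite_mul,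
    one_mul, zero_mul, Nat.cast_add, Nat.cast_one]
  rw [Fin.sum_univ_eq_sum_range
      (fun i => if i = n then (if i + 1 ≤ k then (i : ℂ) + 1 else 0) else 0),
    Finset.sum_ite_eq', ite_and]
  simp only [Finset.mem_range]

theorem truncated_annihilation_trace_identities_general (N : ℕ)
    (a : Matrix (Fin (N + 1)) (Fin (N + 1)) ℂ)
    (ha : ∀ i j : Fin (N + 1),
      a i j = if (i : ℕ) + 1 = (j : ℕ) then (Real.sqrt (j : ℕ) : ℂ) else 0)
    (Pj : ℕ → Matrix (Fin (N + 1)) (Fin (N + 1)) ℂ)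
    (hPj : ∀ m, Pj m = Matrix.diagonal (fun i : Fin (N + 1) => if (i : ℕ) ≤ m then (1 : ℂ) else 0))
    (n k : ℕ) (hk : k ≤ N) :
    (k ≤ n → Matrix.trace (Pj n * a * Pj k * aᴴ - Pj n * Pj k * (aᴴ * a)) = 0) ∧
    (n + 1 ≤ k →
      Matrix.trace (Pj n * a * Pj k * aᴴ - Pj n * Pj k * (aᴴ * a)) = ((n : ℂ) + 1)) := by
  obtain rfl : a = annihilation N := Matrix.ext ha
  obtain rfl : Pj = lowerProjection N := funext hPj
  rw [trace_lowerProjection_annihilation]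
  exact ⟨fun hkn => if_neg (by omega), fun hnk => if_pos (by omega)⟩

/-- Trace identities for the truncated annihilation operator `a` on `ℂ^{N+1}` and the
projections `Π_m↓` onto the first `m+1` standard basis vectors:
for `n ≥ k` the trace of `Π_n↓ a Π_k↓ a† - Π_n↓ Π_k↓ a† a` is `0`, and for `k ≥ n+1`
it is `n+1`. -/
theorem truncated_annihilation_trace_identities (N : ℕ)
    (a : Matrix (Fin (N + 1)) (Fin (N + 1)) ℂ)
    (ha : ∀ i j : Fin (N + 1),
      a i j = if (i : ℕ) + 1 = (j : ℕ) then (Real.sqrt (j : ℕ) : ℂ) else 0)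
    (Pj : ℕ → Matrix (Fin (N + 1)) (Fin (N + 1)) ℂ)
    (hPj : ∀ m, Pj m = Matrix.diagonal (fun i : Fin (N + 1) => if (i : ℕ) ≤ m then (1 : ℂ) else 0))
    (n k : ℕ) (hn : n ≤ N) (hk : k ≤ N) :
    (k ≤ n → Matrix.trace (Pj n * a * Pj k * aᴴ - Pj n * Pj k * (aᴴ * a)) = 0) ∧
    (n + 1 ≤ k →
      Matrix.trace (Pj n * a * Pj k * aᴴ - Pj n * Pj k * (aᴴ * a)) = ((n : ℂ) + 1)) :=
  truncated_annihilation_trace_identities_general N a ha Pj hPj n k hk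
end
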